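/- arXiv:0909.3143 — 8 statements merged into one kernel-verified Lean document; each statement's English description precedes it below -/
import Mathlib

section
/- For a sequence (k_1,...,k_m) of nonnegative integers summing to n and a divisor d of n, the q-multinomial coefficient [n choose k_1,...,k_m]_q evaluated at a primitive d-th root of unity ω_d equals the ordinary multinomial coefficient (n/d choose k_1/d,...,k_m/d) if d divides every k_i, and equals 0 otherwise. -/
open Finset

/-- The `q`-analogue `[n]_q = 1 + q + ⋯ + q^{n-1}` as a polynomial over `ℂ`. -/
noncomputable def qInt (n : ℕ) : Polynomial ℂ := ∑ i ∈ Finset.range n, Polynomial.X ^ i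

/-- The `q`-factorial `[n]_q! = [n]_q [n-1]_q ⋯ [1]_q`. -/
noncomputable def qFact : ℕ → Polynomial ℂ
  | 0 => 1
  | n + 1 => qFact n * qInt (n + 1)

/-! Over `ℂ[q]` one has `[n]_q! = [d]_q ^ ⌊n/d⌋ · R_n(q)`, where `R_n` arises from `[n]_q!` by
replacing each factor `[j]_q` with `d ∣ j` by `[j/d]_{q^d} = [j]_q / [d]_q`. At a primitive `d`-th
root of unity `ω` none of the factors of `R_n` vanishes: `[j/d]_{ω^d} = j/d`, and for `d ∤ j` the
value `[j]_ω` depends only on `j mod d` and is nonzero. Hence `R_n(ω) ≠ 0` and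
`R_{dt}(ω) = t! · ([d-1]_ω!)^t`. Cancelling `[d]_q ^ ∑ ⌊k_i/d⌋` from `P · ∏ [k_i]_q! = [n]_q!`
leaves the factor `[d]_q ^ (n/d - ∑ ⌊k_i/d⌋)` on the right, which is `1` exactly when `d` divides
every `k_i` and otherwise vanishes at `ω`; evaluating at `ω` gives the claim. -/

open Polynomial

namespace Nat

variable {ι : Type*} {s : Finset ι} {f : ι → ℕ} {d : ℕ}

lemma sum_div_le_sum_div : ∑ i ∈ s, f i / d ≤ (∑ i ∈ s, f i) / d := by
  obtain rfl | hd := d.eq_zero_or_pos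
  · simp
  rw [Nat.le_div_iff_mul_le hd, sum_mul]
  exact sum_le_sum fun i _ => Nat.div_mul_le_self (f i) d

lemma sum_div_lt_sum_div (hd : d ∣ ∑ i ∈ s, f i) (h : ∃ i ∈ s, ¬ d ∣ f i) :
    ∑ i ∈ s, f i / d < (∑ i ∈ s, f i) / d := by
  refine Nat.lt_of_mul_lt_mul_left (a := d) ?_
  rw [Nat.mul_div_cancel' hd, mul_sum]
  exact sum_lt_sum (fun i _ => Nat.mul_div_le (f i) d)
    (h.imp fun i ⟨hi, hdi⟩ => ⟨hi, Nat.mul_div_lt_iff_not_dvd.2 hdi⟩)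

end Nat

lemma qInt_mul_X_sub_one (n : ℕ) : qInt n * (X - 1) = X ^ n - 1 := geom_sum_mul X n

lemma eval_qInt_mul_sub_one (n : ℕ) (z : ℂ) : (qInt n).eval z * (z - 1) = z ^ n - 1 := by
  simpa using congrArg (eval z) (qInt_mul_X_sub_one n)

lemma qInt_ne_zero {d : ℕ} (hd : 0 < d) : qInt d ≠ 0 := fun h => by
  simpa [qInt, eval_finsetSum, hd.ne'] using congrArg (eval 1) h

lemma qInt_mul (d t : ℕ) : qInt (d * t) = qInt d * expand ℂ d (qInt t) := by
  refine mul_right_cancel₀ (X_sub_C_ne_zero (1 : ℂ)) ?_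
  have hexp : expand ℂ d (qInt t) * (X ^ d - 1) = X ^ (d * t) - 1 := by
    simpa [pow_mul] using congrArg (expand ℂ d) (qInt_mul_X_sub_one t)
  rw [C_1, qInt_mul_X_sub_one, mul_right_comm, qInt_mul_X_sub_one, ← hexp, mul_comm]

lemma qFact_eq_prod_range (n : ℕ) : qFact n = ∏ j ∈ range n, qInt (j + 1) := by
  induction n with
  | zero => rfl
  | succ n ih => rw [qFact, ih, prod_range_succ]

/-- `[j]_q`, with the factor `[d]_q` (which vanishes at the primitive `d`-th roots of unity)
removed when `d ∣ j`. -/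
noncomputable def reducedQInt (d j : ℕ) : Polynomial ℂ :=
  if d ∣ j then expand ℂ d (qInt (j / d)) else qInt j

noncomputable def reducedQFact (d n : ℕ) : Polynomial ℂ :=
  ∏ j ∈ range n, reducedQInt d (j + 1)

lemma qFact_eq_qInt_pow_mul_reducedQFact (d n : ℕ) :
    qFact n = qInt d ^ (n / d) * reducedQFact d n := by
  induction n with
  | zero => simp [qFact, reducedQFact]
  | succ n ih =>
    rw [qFact, ih, reducedQFact, reducedQFact, prod_range_succ, reducedQInt]
    split_ifs with h
    · have hfactor : qInt (n + 1) = qInt d * expand ℂ d (qInt ((n + 1) / d)) := by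
        rw [← qInt_mul, Nat.mul_div_cancel' h]
      rw [hfactor, Nat.succ_div_of_dvd h]
      ring
    · rw [Nat.succ_div_of_not_dvd h]
      ring

lemma mul_prod_reducedQFact_eq {ι : Type*} [Fintype ι] {d : ℕ} (hd : 0 < d) (k : ι → ℕ)
    {P : Polynomial ℂ} (hP : P * ∏ i, qFact (k i) = qFact (∑ i, k i)) :
    P * ∏ i, reducedQFact d (k i) =
      qInt d ^ ((∑ i, k i) / d - ∑ i, k i / d) * reducedQFact d (∑ i, k i) := by
  refine mul_left_cancel₀ (pow_ne_zero (∑ i, k i / d) (qInt_ne_zero hd)) ?_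
  calc qInt d ^ (∑ i, k i / d) * (P * ∏ i, reducedQFact d (k i))
      = P * ∏ i, qFact (k i) := by
        simp only [qFact_eq_qInt_pow_mul_reducedQFact d, prod_mul_distrib, prod_pow_eq_pow_sum]
        ring
    _ = qInt d ^ ((∑ i, k i) / d) * reducedQFact d (∑ i, k i) := by
        rw [hP, qFact_eq_qInt_pow_mul_reducedQFact d]
    _ = _ := by rw [← mul_assoc, ← pow_add, Nat.add_sub_cancel' Nat.sum_div_le_sum_div]

namespace IsPrimitiveRoot

variable {d : ℕ} {ω : ℂ} (hω : IsPrimitiveRoot ω d)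
include hω

lemma sub_one_ne_zero_of_ne_one (hd : d ≠ 1) : ω - 1 ≠ 0 :=
  sub_ne_zero.2 fun h => hd (one_left_iff.1 (h ▸ hω))

lemma eval_qInt_eq_zero_iff (hd : d ≠ 1) {j : ℕ} : (qInt j).eval ω = 0 ↔ d ∣ j := by
  rw [← hω.pow_eq_one_iff_dvd, ← sub_eq_zero (a := ω ^ j), ← eval_qInt_mul_sub_one, mul_eq_zero,
    or_iff_left (hω.sub_one_ne_zero_of_ne_one hd)]

lemma eval_qInt_mod (hd : d ≠ 1) (j : ℕ) : (qInt j).eval ω = (qInt (j % d)).eval ω := by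
  refine mul_right_cancel₀ (hω.sub_one_ne_zero_of_ne_one hd) ?_
  rw [eval_qInt_mul_sub_one, eval_qInt_mul_sub_one, ← Nat.mod_add_div j d, pow_add, pow_mul,
    hω.pow_eq_one, one_pow, mul_one, Nat.add_mul_mod_self_left, Nat.mod_mod]

lemma eval_expand_qInt (t : ℕ) : (expand ℂ d (qInt t)).eval ω = t := by
  simp [hω.pow_eq_one, qInt, eval_finsetSum]

lemma eval_reducedQInt_ne_zero {j : ℕ} (hj : 0 < j) : (reducedQInt d j).eval ω ≠ 0 := by
  rw [reducedQInt]
  split_ifs with h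
  · rw [hω.eval_expand_qInt, Nat.cast_ne_zero]
    exact (Nat.div_pos (Nat.le_of_dvd hj h) (Nat.pos_of_dvd_of_pos h hj)).ne'
  · exact (hω.eval_qInt_eq_zero_iff (by rintro rfl; exact h (one_dvd j))).not.2 h

lemma eval_reducedQFact_ne_zero (n : ℕ) : (reducedQFact d n).eval ω ≠ 0 := by
  rw [reducedQFact, eval_prod, prod_ne_zero_iff]
  exact fun j _ => hω.eval_reducedQInt_ne_zero j.succ_pos

/-- Along a block of `d` consecutive integers only the multiple of `d` contributes a new
factor; the others reproduce `[1]_ω ⋯ [d-1]_ω`, as `[j]_ω` depends only on `j mod d`. -/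
lemma prod_eval_reducedQInt_block (hd : 0 < d) (t : ℕ) :
    ∏ b ∈ range d, (reducedQInt d (d * t + b + 1)).eval ω =
      (t + 1) * (qFact (d - 1)).eval ω := by
  obtain ⟨d, rfl⟩ : ∃ d', d = d' + 1 := ⟨d - 1, by omega⟩
  rw [prod_range_succ, Nat.add_sub_cancel, qFact_eq_prod_range, eval_prod, mul_comm]
  congr 1
  · rw [reducedQInt, if_pos ⟨t + 1, by ring⟩, hω.eval_expand_qInt]
    rw [show (d + 1) * t + d + 1 = (d + 1) * (t + 1) by ring, Nat.mul_div_cancel_left _ d.succ_pos]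
    push_cast; ring
  · refine prod_congr rfl fun b hb => ?_
    have hb : b + 1 < d + 1 := by simpa using hb
    have hmod : ((d + 1) * t + b + 1) % (d + 1) = b + 1 := by
      rw [add_assoc, Nat.mul_add_mod, Nat.mod_eq_of_lt hb]
    have hd1 : d + 1 ≠ 1 := by omega
    rw [reducedQInt, if_neg (fun h => by simpa [hmod] using Nat.mod_eq_zero_of_dvd h),
      hω.eval_qInt_mod hd1, hmod]

lemma eval_reducedQFact_of_dvd (hd : 0 < d) {n : ℕ} (hn : d ∣ n) :
    (reducedQFact d n).eval ω = (n / d).factorial * (qFact (d - 1)).eval ω ^ (n / d) := by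
  obtain ⟨t, rfl⟩ := hn
  rw [Nat.mul_div_cancel_left t hd]
  induction t with
  | zero => simp [reducedQFact]
  | succ t ih =>
    rw [reducedQFact, mul_add_one, prod_range_add, eval_mul, ← reducedQFact, ih, eval_prod,
      hω.prod_eval_reducedQInt_block hd, Nat.factorial_succ]
    push_cast
    ring

lemma eval_qFact_sub_one_ne_zero (hd : 0 < d) : (qFact (d - 1)).eval ω ≠ 0 := by
  simpa [hω.eval_reducedQFact_of_dvd hd dvd_rfl, Nat.div_self hd] using
    hω.eval_reducedQFact_ne_zero d

end IsPrimitiveRoot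

lemma eq_multinomial_of_mul_prod_factorial {K ι : Type*} [Field K] [CharZero K] (s : Finset ι)
    (f : ι → ℕ) {x : K} (h : x * ∏ i ∈ s, ((f i).factorial : K) = (∑ i ∈ s, f i).factorial) :
    x = Nat.multinomial s f := by
  have hprod : ∏ i ∈ s, ((f i).factorial : K) ≠ 0 :=
    prod_ne_zero_iff.2 fun i _ => Nat.cast_ne_zero.2 (f i).factorial_ne_zero
  refine mul_right_cancel₀ hprod ?_
  rw [h, mul_comm]
  exact_mod_cast (Nat.multinomial_spec s f).symm

/-- For a sequence `(k 1, …, k m)` of nonnegative integers summing to `n` and a divisor `d`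
of `n`, the `q`-multinomial coefficient (i.e. the polynomial `P` with
`P ⋅ ∏ᵢ [kᵢ]_q! = [n]_q!`) evaluated at a primitive `d`-th root of unity `ω` equals the
ordinary multinomial coefficient `(n/d choose k₁/d, …, k_m/d)` if `d` divides every `kᵢ`,
and `0` otherwise. -/
theorem qMultinomial_eval_primitiveRoot (m n d : ℕ) (k : Fin m → ℕ)
    (hsum : ∑ i, k i = n) (hd : 0 < d) (hdn : d ∣ n)
    (ω : ℂ) (hω : IsPrimitiveRoot ω d)
    (P : Polynomial ℂ) (hP : P * ∏ i, qFact (k i) = qFact n) :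
    P.eval ω =
      if ∀ i, d ∣ k i then (Nat.multinomial Finset.univ (fun i => k i / d) : ℂ) else 0 := by
  subst hsum
  have heval := congrArg (eval ω) (mul_prod_reducedQFact_eq hd k hP)
  simp only [eval_mul, eval_pow, eval_prod] at heval
  split_ifs with hall
  · rw [prod_congr rfl fun i _ => hω.eval_reducedQFact_of_dvd hd (hall i), prod_mul_distrib,
      prod_pow_eq_pow_sum, hω.eval_reducedQFact_of_dvd hd hdn, Nat.sum_div fun i _ => hall i,
      Nat.sub_self, pow_zero, one_mul, ← mul_assoc] at heval
    exact eq_multinomial_of_mul_prod_factorial _ _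
      (mul_right_cancel₀ (pow_ne_zero _ (hω.eval_qFact_sub_one_ne_zero hd)) heval)
  · obtain ⟨i, hi⟩ := not_forall.1 hall
    have hd1 : d ≠ 1 := by rintro rfl; exact hi (one_dvd _)
    have he : (∑ i, k i) / d - ∑ i, k i / d ≠ 0 :=
      Nat.sub_ne_zero_of_lt (Nat.sum_div_lt_sum_div hdn ⟨i, mem_univ i, hi⟩)
    rw [(hω.eval_qInt_eq_zero_iff hd1).2 dvd_rfl, zero_pow he, zero_mul] at heval
    exact (mul_eq_zero.1 heval).resolve_right
      (prod_ne_zero_iff.2 fun i _ => hω.eval_reducedQFact_ne_zero _)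
end

section
/- For any partition μ of n with parts μ_1,...,μ_l, the rational function T_μ(q) = ∏_{i=1}^n (1−q^i) / ∏_{i=1}^l (1−q^{μ_i}) is a polynomial in q. -/
open Finset Polynomial

/-! Among any `m` consecutive integers `k + 1, …, k + m` one is a multiple of `m`, so `1 - q ^ m`
divides the product of the `m` consecutive factors `1 - q ^ (k + 1), …, 1 - q ^ (k + m)`.
Cutting `1, …, n` into consecutive blocks of lengths `μ₁, …, μ_l` gives the divisibility. -/

section OneSubPow

variable {R : Type*} [CommRing R] (x : R)

theorem one_sub_pow_dvd_one_sub_pow_of_dvd {m k : ℕ} (h : m ∣ k) : 1 - x ^ m ∣ 1 - x ^ k := by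
  obtain ⟨c, rfl⟩ := h
  rw [pow_mul]
  exact one_sub_dvd_one_sub_pow (x ^ m) c

theorem one_sub_pow_dvd_prod_Ico {m : ℕ} (hm : 0 < m) (k : ℕ) :
    1 - x ^ m ∣ ∏ i ∈ Ico k (k + m), (1 - x ^ (i + 1)) := by
  set j := m * (k / m + 1)
  have hkj : k < j := Nat.lt_mul_div_succ k hm
  have hjk : j ≤ k + m := by
    simpa only [j, mul_add_one, add_le_add_iff_right] using Nat.mul_div_le k m
  have hmem : j - 1 ∈ Ico k (k + m) := mem_Ico.mpr ⟨by omega, by omega⟩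
  refine (one_sub_pow_dvd_one_sub_pow_of_dvd x ?_).trans (dvd_prod_of_mem _ hmem)
  rw [Nat.sub_add_cancel (by omega)]
  exact Dvd.intro _ rfl

theorem prod_one_sub_pow_dvd_prod_range_sum (s : Multiset ℕ) (hs : ∀ i ∈ s, 0 < i) :
    (s.map fun i => 1 - x ^ i).prod ∣ ∏ i ∈ range s.sum, (1 - x ^ (i + 1)) := by
  induction s using Multiset.induction_on with
  | empty => simp
  | cons m s ih =>
    rw [Multiset.map_cons, Multiset.prod_cons, Multiset.sum_cons, add_comm m,
      ← prod_range_mul_prod_Ico _ (Nat.le_add_right _ m), mul_comm]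
    exact mul_dvd_mul (ih fun i hi => hs i (Multiset.mem_cons_of_mem hi))
      (one_sub_pow_dvd_prod_Ico x (hs m (Multiset.mem_cons_self m s)) _)

end OneSubPow

/-- For any partition `μ` of `n`, the rational function
`T_μ(q) = ∏_{i=1}^n (1−q^i) / ∏_{i=1}^l (1−q^{μ_i})` is a polynomial in `q`;
that is, `∏_{i=1}^l (1−q^{μ_i})` divides `∏_{i=1}^n (1−q^i)`. -/
theorem Tmu_is_polynomial (n : ℕ) (μ : Nat.Partition n) :
    (μ.parts.map fun i => (1 - Polynomial.X ^ i : Polynomial ℚ)).prod ∣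
      ∏ i ∈ Finset.range n, (1 - Polynomial.X ^ (i + 1)) := by
  simpa only [μ.parts_sum] using
    prod_one_sub_pow_dvd_prod_range_sum (X : ℚ[X]) μ.parts fun _ => μ.parts_pos
end

section
/- Let μ be a partition of n and let d be a positive integer with either dk = n or dk + 1 = n for some positive integer k. Then the polynomial T_μ(q) = ∏_{i=1}^n (1−q^i) / ∏_{i=1}^l (1−q^{μ_i}) evaluated at a primitive d-th root of unity ω_d equals z_μ if μ = d^k (all parts equal to d) or μ = 1d^k (one part equal to 1 and k parts equal to d), and equals 0 otherwise. Here z_μ = ∏_j j^{m_j(μ)} m_j(μ)! where m_j(μ) is the number of parts of μ equal to j. -/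
/-!
With `Φ = 1 - q ^ d`, every factor `1 - q ^ i` with `d ∣ i` is `Φ` times the geometric sum
`1 + q ^ d + ⋯ + q ^ (i - d)`, which takes the value `i / d` at `ω`, while the factors with
`d ∤ i` do not vanish at `ω`. So the numerator of `T_μ` carries `Φ ^ ⌊n / d⌋` and the denominator
`Φ ^ c`, where `c` is the number of parts divisible by `d`; since `d c ≤ n`, `T_μ(ω) = 0` unless
`c = ⌊n / d⌋`. With `n % d ≤ 1` that forces `μ = d ^ ⌊n / d⌋ 1 ^ (n % d)`, and the surviving
cofactors are computed blockwise from `∏_{0 < t < d} (1 - ω ^ t) = d`.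
-/

open Finset Polynomial

/-- `z_μ = ∏_j j^{m_j(μ)} m_j(μ)!`, where `m_j(μ)` is the number of parts of `μ` equal
to `j`. -/
def zPartition {n : ℕ} (μ : Nat.Partition n) : ℕ :=
  ∏ j ∈ Finset.range n, (j + 1) ^ (μ.parts.count (j + 1)) * (μ.parts.count (j + 1)).factorial

namespace Multiset

theorem mul_card_le_sum_of_forall_dvd {s : Multiset ℕ} {d : ℕ} (hpos : ∀ a ∈ s, 0 < a)
    (hdvd : ∀ a ∈ s, d ∣ a) : d * card s ≤ s.sum := by
  simpa [mul_comm] using card_nsmul_le_sum fun a ha => Nat.le_of_dvd (hpos a ha) (hdvd a ha)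

theorem eq_replicate_of_forall_dvd_of_sum_lt {s : Multiset ℕ} {d : ℕ} (hpos : ∀ a ∈ s, 0 < a)
    (hdvd : ∀ a ∈ s, d ∣ a) (hs : s.sum < d * (card s + 1)) : s = replicate (card s) d := by
  rw [eq_replicate_card]
  intro a ha
  obtain ⟨t, rfl⟩ := hdvd a ha
  have ht1 : 0 < t := Nat.pos_of_mul_pos_left (hpos _ ha)
  obtain ⟨s', rfl⟩ := exists_cons_of_mem ha
  have hs' : d * card s' ≤ s'.sum :=
    mul_card_le_sum_of_forall_dvd (fun x hx => hpos x (mem_cons_of_mem hx))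
      (fun x hx => hdvd x (mem_cons_of_mem hx))
  rw [sum_cons, card_cons] at hs
  have ht2 : t < 2 := Nat.lt_of_mul_lt_mul_left (a := d) (by linarith)
  rw [show t = 1 by omega, mul_one]

theorem eq_replicate_sum_one_of_sum_le_one {s : Multiset ℕ} (hpos : ∀ a ∈ s, 0 < a)
    (hs : s.sum ≤ 1) : s = replicate s.sum 1 := by
  have hone : ∀ b ∈ s, b = 1 := fun b hb => by
    have := hpos b hb
    have := le_sum_of_mem hb
    omega
  conv_rhs => rw [eq_replicate_card.mpr hone, sum_replicate, smul_eq_mul, mul_one]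
  exact eq_replicate_card.mpr hone

theorem card_filter_dvd_replicate_add_replicate_one {d m e : ℕ} (he : e ≤ 1) (hed : e < d) :
    ((replicate m d + replicate e 1).filter (d ∣ ·)).card = m := by
  have hd1 : ∀ b ∈ replicate e 1, ¬ d ∣ b := fun b hb => by
    rw [eq_of_mem_replicate hb, Nat.dvd_one]
    have := card_pos_iff_exists_mem.mpr ⟨b, hb⟩
    rw [card_replicate] at this
    omega
  rw [filter_add, filter_eq_nil.mpr hd1, add_zero,
    filter_eq_self.mpr fun b hb => (eq_of_mem_replicate hb).symm ▸ dvd_rfl, card_replicate]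

end Multiset

namespace Nat.Partition

variable {n : ℕ}

theorem card_filter_dvd_le_div (μ : n.Partition) {d : ℕ} (hd : 0 < d) :
    (μ.parts.filter (d ∣ ·)).card ≤ n / d := by
  rw [Nat.le_div_iff_mul_le hd, mul_comm]
  calc d * (μ.parts.filter (d ∣ ·)).card
      ≤ (μ.parts.filter (d ∣ ·)).sum :=
        Multiset.mul_card_le_sum_of_forall_dvd
          (fun a ha => μ.parts_pos (Multiset.mem_of_mem_filter ha))
          (fun a ha => (Multiset.mem_filter.mp ha).2)
    _ ≤ μ.parts.sum := by
      conv_rhs => rw [← Multiset.filter_add_not (d ∣ ·) μ.parts, Multiset.sum_add]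
      exact Nat.le_add_right _ _
    _ = n := μ.parts_sum

theorem parts_eq_replicate_add_replicate (μ : n.Partition) {d : ℕ} (hd : 0 < d)
    (hc : (μ.parts.filter (d ∣ ·)).card = n / d) (he : n % d ≤ 1) :
    μ.parts = Multiset.replicate (n / d) d + Multiset.replicate (n % d) 1 := by
  set A := μ.parts.filter (d ∣ ·)
  set B := μ.parts.filter (¬ d ∣ ·)
  have hsum : A.sum + B.sum = n := by
    rw [← Multiset.sum_add, Multiset.filter_add_not, μ.parts_sum]
  have hA : A = Multiset.replicate (n / d) d := by
    rw [← hc]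
    refine Multiset.eq_replicate_of_forall_dvd_of_sum_lt
      (fun a ha => μ.parts_pos (Multiset.mem_of_mem_filter ha))
      (fun a ha => (Multiset.mem_filter.mp ha).2) ?_
    rw [hc]
    exact lt_of_le_of_lt (by omega) (Nat.lt_mul_div_succ n hd)
  have hB : B = Multiset.replicate (n % d) 1 := by
    have hBsum : B.sum = n % d := by
      rw [hA, Multiset.sum_replicate, smul_eq_mul, mul_comm] at hsum
      have := Nat.div_add_mod n d
      omega
    rw [← hBsum]
    exact Multiset.eq_replicate_sum_one_of_sum_le_one
      (fun b hb => μ.parts_pos (Multiset.mem_of_mem_filter hb)) (hBsum ▸ he)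
  rw [← hA, ← hB, Multiset.filter_add_not]

theorem parts_eq_replicate_or_one_cons_replicate_iff {d k : ℕ} (hd : 0 < d)
    (hn : n = d * k ∨ n = d * k + 1) (μ : n.Partition) :
    (μ.parts = Multiset.replicate k d ∨ μ.parts = 1 ::ₘ Multiset.replicate k d) ↔
      μ.parts = Multiset.replicate (n / d) d + Multiset.replicate (n % d) 1 := by
  have hsum (s : Multiset ℕ) (h : s.sum ≠ n) : μ.parts ≠ s := fun h' => h (h' ▸ μ.parts_sum)
  rcases hn with hn | hn
  · have hdiv : n / d = k := by rw [hn, Nat.mul_div_cancel_left k hd]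
    have hmod : n % d = 0 := by rw [hn, Nat.mul_mod_right]
    rw [hdiv, hmod, Multiset.replicate_zero, add_zero,
      or_iff_left (hsum _ (by simp [hn, mul_comm]))]
  · rw [or_iff_right (hsum _ (by simp [hn, mul_comm]))]
    obtain rfl | hd2 := (show 1 ≤ d from hd).eq_or_lt
    · have hdiv : n / 1 = k + 1 := by rw [Nat.div_one, hn, one_mul]
      rw [hdiv, Nat.mod_one, Multiset.replicate_zero, add_zero, Multiset.replicate_succ]
    · have hdiv : n / d = k := by rw [hn, Nat.mul_add_div hd, Nat.div_eq_of_lt hd2, add_zero]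
      have hmod : n % d = 1 := by rw [hn, Nat.mul_add_mod, Nat.mod_eq_of_lt hd2]
      rw [hdiv, hmod, Multiset.replicate_one, add_comm, Multiset.singleton_add]

theorem zPartition_eq_of_parts_eq (μ : n.Partition) {d m e : ℕ} (he : e ≤ 1) (hed : e < d)
    (h : μ.parts = Multiset.replicate m d + Multiset.replicate e 1) :
    zPartition μ = d ^ m * m.factorial := by
  have hcount (j : ℕ) : (j + 1) ^ μ.parts.count (j + 1) * (μ.parts.count (j + 1)).factorial =
      if j + 1 = d then d ^ m * m.factorial else 1 := by
    rw [h, Multiset.count_add, Multiset.count_replicate, Multiset.count_replicate]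
    by_cases hjd : d = j + 1
    · have he0 : (if 1 = j + 1 then e else 0) = 0 := by split_ifs <;> omega
      rw [if_pos hjd, he0, add_zero, if_pos hjd.symm, hjd]
    · rw [if_neg hjd, zero_add, if_neg (Ne.symm hjd)]
      split_ifs with h1
      · interval_cases e <;> simp [← h1]
      · simp
  unfold zPartition
  simp_rw [hcount]
  rcases m.eq_zero_or_pos with rfl | hm
  · simp
  have hdn : d - 1 < n := by
    have := μ.parts_sum
    rw [h, Multiset.sum_add, Multiset.sum_replicate, smul_eq_mul] at this
    have := Nat.le_mul_of_pos_left d hm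
    omega
  rw [prod_eq_single_of_mem (d - 1) (mem_range.mpr hdn) fun j _ hj => if_neg (by omega),
    if_pos (by omega)]

end Nat.Partition

namespace Polynomial

variable {R : Type*} [CommRing R]

noncomputable def oneSubXPowCofactor (d i : ℕ) : R[X] :=
  if d ∣ i then ∑ t ∈ range (i / d), (X ^ d) ^ t else 1 - X ^ i

theorem one_sub_X_pow_eq_mul_oneSubXPowCofactor (d i : ℕ) :
    (1 - X ^ i : R[X]) = (1 - X ^ d) ^ (if d ∣ i then 1 else 0) * oneSubXPowCofactor d i := by
  unfold oneSubXPowCofactor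
  split_ifs with h
  · obtain ⟨j, rfl⟩ := h
    rcases d.eq_zero_or_pos with rfl | hd
    · simp
    · rw [pow_one, mul_neg_geom_sum, Nat.mul_div_cancel_left j hd, pow_mul]
  · rw [pow_zero, one_mul]

theorem multiset_prod_map_one_sub_X_pow (d : ℕ) (s : Multiset ℕ) :
    (s.map fun i => (1 - X ^ i : R[X])).prod =
      (1 - X ^ d) ^ (s.filter (d ∣ ·)).card * (s.map (oneSubXPowCofactor d)).prod := by
  induction s using Multiset.induction_on with
  | empty => simp
  | cons a s ih =>
    rw [Multiset.map_cons, Multiset.prod_cons, ih, one_sub_X_pow_eq_mul_oneSubXPowCofactor d a,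
      Multiset.filter_cons, Multiset.map_cons, Multiset.prod_cons]
    split_ifs <;> simp only [Multiset.card_add, Multiset.card_singleton, Multiset.zero_add,
      pow_add, pow_one, pow_zero, one_mul] <;> ring

theorem prod_range_one_sub_X_pow (d n : ℕ) :
    ∏ i ∈ range n, (1 - X ^ (i + 1) : R[X]) =
      (1 - X ^ d) ^ (n / d) * ∏ i ∈ range n, oneSubXPowCofactor d (i + 1) := by
  have h := multiset_prod_map_one_sub_X_pow (R := R) d ((range n).val.map (· + 1))
  rw [Multiset.filter_map, Multiset.card_map, Multiset.map_map, Multiset.map_map] at h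
  rw [prod_eq_multiset_prod, prod_eq_multiset_prod, ← Nat.card_multiples]
  exact h

theorem eval_oneSubXPowCofactor_of_dvd {d i : ℕ} {ω : R} (hω : ω ^ d = 1) (h : d ∣ i) :
    (oneSubXPowCofactor d i).eval ω = (i / d : ℕ) := by
  simp [oneSubXPowCofactor, h, eval_finsetSum, hω]

theorem eval_oneSubXPowCofactor_of_not_dvd {d i : ℕ} (ω : R) (h : ¬ d ∣ i) :
    (oneSubXPowCofactor d i).eval ω = 1 - ω ^ i := by
  simp [oneSubXPowCofactor, h]

theorem eval_oneSubXPowCofactor_ne_zero [IsDomain R] [CharZero R] {d i : ℕ} {ω : R}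
    (hω : IsPrimitiveRoot ω d) (hi : 0 < i) : (oneSubXPowCofactor d i).eval ω ≠ 0 := by
  by_cases h : d ∣ i
  · rw [eval_oneSubXPowCofactor_of_dvd hω.pow_eq_one h, Nat.cast_ne_zero]
    exact (Nat.div_pos (Nat.le_of_dvd hi h) (Nat.pos_of_dvd_of_pos h hi)).ne'
  · rw [eval_oneSubXPowCofactor_of_not_dvd ω h, sub_ne_zero, ne_comm]
    exact mt (hω.pow_eq_one_iff_dvd i).mp h

theorem prod_range_eval_oneSubXPowCofactor_mul_add {d : ℕ} {ω : R} (hω : ω ^ d = 1) (m : ℕ)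
    {e : ℕ} (he : e < d) :
    ∏ i ∈ range e, (oneSubXPowCofactor d (d * m + i + 1)).eval ω =
      ∏ i ∈ range e, (1 - ω ^ (i + 1)) := by
  refine prod_congr rfl fun i hi => ?_
  have hndvd : ¬ d ∣ d * m + i + 1 := by
    rw [add_assoc, Nat.dvd_add_right (dvd_mul_right d m)]
    exact Nat.not_dvd_of_pos_of_lt i.succ_pos (by simp at hi; omega)
  rw [eval_oneSubXPowCofactor_of_not_dvd ω hndvd, add_assoc, pow_add, pow_mul, hω, one_pow,
    one_mul]

theorem prod_range_mul_eval_oneSubXPowCofactor [IsDomain R] {d : ℕ} {ω : R}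
    (hω : IsPrimitiveRoot ω d) (hd : 0 < d) (m : ℕ) :
    ∏ i ∈ range (d * m), (oneSubXPowCofactor d (i + 1)).eval ω = (d : R) ^ m * m.factorial := by
  obtain ⟨d, rfl⟩ := Nat.exists_eq_add_one_of_ne_zero hd.ne'
  induction m with
  | zero => simp
  | succ m ih =>
    have hblock :
        ∏ i ∈ range (d + 1), (oneSubXPowCofactor (d + 1) ((d + 1) * m + i + 1)).eval ω =
          (d + 1 : ℕ) * (m + 1 : ℕ) := by
      rw [prod_range_succ,
        prod_range_eval_oneSubXPowCofactor_mul_add hω.pow_eq_one m d.lt_succ_self,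
        hω.prod_one_sub_pow_eq_order,
        eval_oneSubXPowCofactor_of_dvd hω.pow_eq_one ⟨m + 1, by ring⟩,
        show ((d + 1) * m + d + 1) / (d + 1) = m + 1 by
          rw [show (d + 1) * m + d + 1 = (d + 1) * (m + 1) by ring, Nat.mul_div_cancel_left _ hd]]
      push_cast; ring
    rw [Nat.mul_succ, prod_range_add, ih, hblock, Nat.factorial_succ]
    push_cast; ring

theorem prod_range_eval_oneSubXPowCofactor [IsDomain R] {d : ℕ} {ω : R}
    (hω : IsPrimitiveRoot ω d) (hd : 0 < d) (n : ℕ) :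
    ∏ i ∈ range n, (oneSubXPowCofactor d (i + 1)).eval ω =
      (d : R) ^ (n / d) * (n / d).factorial * ∏ i ∈ range (n % d), (1 - ω ^ (i + 1)) := by
  conv_lhs => rw [← Nat.div_add_mod n d]
  rw [prod_range_add, prod_range_mul_eval_oneSubXPowCofactor hω hd,
    ← prod_range_eval_oneSubXPowCofactor_mul_add hω.pow_eq_one _ (Nat.mod_lt n hd)]

theorem prod_map_eval_oneSubXPowCofactor_replicate_add_replicate_one {d m e : ℕ} {ω : R}
    (hω : ω ^ d = 1) (hd : 0 < d) (he : e ≤ 1) (hed : e < d) :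
    ((Multiset.replicate m d + Multiset.replicate e 1).map
        fun i => (oneSubXPowCofactor d i).eval ω).prod =
      ∏ i ∈ range e, (1 - ω ^ (i + 1)) := by
  rw [Multiset.map_add, Multiset.prod_add, Multiset.map_replicate, Multiset.map_replicate,
    Multiset.prod_replicate, Multiset.prod_replicate,
    eval_oneSubXPowCofactor_of_dvd hω dvd_rfl, Nat.div_self hd, Nat.cast_one, one_pow, one_mul]
  interval_cases e
  · simp
  · rw [eval_oneSubXPowCofactor_of_not_dvd ω (by rw [Nat.dvd_one]; omega)]
    simp

theorem eval_mul_prod_eval_oneSubXPowCofactor [IsDomain R] {n d : ℕ} (hd : 0 < d)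
    (μ : n.Partition) {ω : R} (hω : ω ^ d = 1) {P : R[X]}
    (hP : P * (μ.parts.map fun i => (1 - X ^ i : R[X])).prod =
      ∏ i ∈ range n, (1 - X ^ (i + 1))) :
    P.eval ω * (μ.parts.map fun i => (oneSubXPowCofactor d i).eval ω).prod =
      0 ^ (n / d - (μ.parts.filter (d ∣ ·)).card) *
        ∏ i ∈ range n, (oneSubXPowCofactor d (i + 1)).eval ω := by
  set c := (μ.parts.filter (d ∣ ·)).card
  have hΦ : (1 - X ^ d : R[X]) ≠ 0 := by
    rw [← neg_sub, neg_ne_zero, ← C_1]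
    exact X_pow_sub_C_ne_zero hd 1
  rw [multiset_prod_map_one_sub_X_pow d, prod_range_one_sub_X_pow d n,
    ← Nat.add_sub_cancel' (μ.card_filter_dvd_le_div hd), pow_add, mul_left_comm, mul_assoc] at hP
  have := congrArg (eval ω) (mul_left_cancel₀ (pow_ne_zero c hΦ) hP)
  simpa [eval_multiset_prod, eval_prod, hω] using this

theorem eval_eq_ite_of_mul_prod_eq [IsDomain R] [CharZero R] {n d : ℕ} (hd : 0 < d)
    (he : n % d ≤ 1) (μ : n.Partition) {ω : R} (hω : IsPrimitiveRoot ω d) {P : R[X]}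
    (hP : P * (μ.parts.map fun i => (1 - X ^ i : R[X])).prod =
      ∏ i ∈ range n, (1 - X ^ (i + 1))) :
    P.eval ω = if μ.parts = Multiset.replicate (n / d) d + Multiset.replicate (n % d) 1 then
      (d : R) ^ (n / d) * (n / d).factorial else 0 := by
  have key := eval_mul_prod_eval_oneSubXPowCofactor hd μ hω.pow_eq_one hP
  have hne : (μ.parts.map fun i => (oneSubXPowCofactor d i).eval ω).prod ≠ 0 :=
    Multiset.prod_ne_zero fun h0 => by
      obtain ⟨i, hi, h⟩ := Multiset.mem_map.mp h0
      exact eval_oneSubXPowCofactor_ne_zero hω (μ.parts_pos hi) h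
  split_ifs with hμ
  · have hed := Nat.mod_lt n hd
    rw [hμ, prod_map_eval_oneSubXPowCofactor_replicate_add_replicate_one hω.pow_eq_one hd he hed]
      at hne key
    rw [prod_range_eval_oneSubXPowCofactor hω hd,
      Multiset.card_filter_dvd_replicate_add_replicate_one he hed, Nat.sub_self, pow_zero,
      one_mul] at key
    exact mul_right_cancel₀ hne key
  · have hc : (μ.parts.filter (d ∣ ·)).card < n / d :=
      (μ.card_filter_dvd_le_div hd).lt_of_ne fun h =>
        hμ (μ.parts_eq_replicate_add_replicate hd h he)
    rw [zero_pow (Nat.sub_ne_zero_of_lt hc), zero_mul] at key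
    exact (mul_eq_zero.mp key).resolve_right hne

end Polynomial

theorem Tmu_eval_primitiveRoot_general (n d k : ℕ) (hd : 0 < d)
    (hn : n = d * k ∨ n = d * k + 1) (μ : Nat.Partition n)
    (ω : ℂ) (hω : IsPrimitiveRoot ω d)
    (P : Polynomial ℂ)
    (hP : P * (μ.parts.map fun i => (1 - Polynomial.X ^ i : Polynomial ℂ)).prod =
      ∏ i ∈ Finset.range n, (1 - Polynomial.X ^ (i + 1))) :
    P.eval ω =
      if μ.parts = Multiset.replicate k d ∨ μ.parts = 1 ::ₘ Multiset.replicate k d then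
        (zPartition μ : ℂ)
      else 0 := by
  have he : n % d ≤ 1 := by
    rcases hn with rfl | rfl
    · simp
    · rw [Nat.mul_add_mod]; exact Nat.mod_le 1 d
  rw [eval_eq_ite_of_mul_prod_eq hd he μ hω hP]
  simp_rw [μ.parts_eq_replicate_or_one_cons_replicate_iff hd hn]
  split_ifs with h
  · rw [μ.zPartition_eq_of_parts_eq he (Nat.mod_lt n hd) h]
    push_cast
    rfl
  · rfl

/-- Let `μ` be a partition of `n`, with `n = dk` or `n = dk + 1`.  The polynomial
`T_μ(q) = ∏_{i=1}^n (1−q^i) / ∏_{i=1}^l (1−q^{μ_i})` (i.e. the polynomial `P` with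
`P ⋅ ∏ᵢ (1−q^{μᵢ}) = ∏_{i=1}^n (1−q^i)`) evaluated at a primitive `d`-th root of unity `ω`
equals `z_μ` if `μ = d^k` or `μ = 1 d^k`, and `0` otherwise. -/
theorem Tmu_eval_primitiveRoot (n d k : ℕ) (hd : 0 < d) (hk : 0 < k)
    (hn : n = d * k ∨ n = d * k + 1) (μ : Nat.Partition n)
    (ω : ℂ) (hω : IsPrimitiveRoot ω d)
    (P : Polynomial ℂ)
    (hP : P * (μ.parts.map fun i => (1 - Polynomial.X ^ i : Polynomial ℂ)).prod =
      ∏ i ∈ Finset.range n, (1 - Polynomial.X ^ (i + 1))) :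
    P.eval ω =
      if μ.parts = Multiset.replicate k d ∨ μ.parts = 1 ::ₘ Multiset.replicate k d then
        (zPartition μ : ℂ)
      else 0 :=
  Tmu_eval_primitiveRoot_general n d k hd hn μ ω hω P hP
end

section
/- For any positive integer k, the power series identity tA_{k−1}(t)/(1−t)^k = Σ_{j≥1} j^{k−1} t^j holds, where A_{k−1}(t) is the (k−1)-st Eulerian polynomial. -/
open Finset Equiv

/-- The excedance number `exc(σ) = |{i : σ(i) > i}|`. -/
def excNum {n : ℕ} (σ : Equiv.Perm (Fin n)) : ℕ :=
  (Finset.univ.filter fun i : Fin n => (i : ℕ) < (σ i : ℕ)).card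

/-- The number of fixed points `fix(σ) = |{i : σ(i) = i}|`. -/
def fixNum {n : ℕ} (σ : Equiv.Perm (Fin n)) : ℕ :=
  (Finset.univ.filter fun i : Fin n => σ i = i).card

/-- The value `σ(i)`, with positions indexed by `0, …, n-1`. -/
def permVal {n : ℕ} (σ : Equiv.Perm (Fin n)) (i : ℕ) : ℕ :=
  if h : i < n then (σ ⟨i, h⟩ : ℕ) else 0

/-- The descent set of `σ` (0-indexed positions). -/
def desSet {n : ℕ} (σ : Equiv.Perm (Fin n)) : Finset ℕ :=
  (Finset.range (n - 1)).filter fun i => permVal σ (i + 1) < permVal σ i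

/-- The descent number `des(σ)`. -/
def desNum {n : ℕ} (σ : Equiv.Perm (Fin n)) : ℕ := (desSet σ).card

/-- The major index `maj(σ) = Σ_{i ∈ Des(σ)} i` (with positions counted `1, …, n-1`). -/
def majNum {n : ℕ} (σ : Equiv.Perm (Fin n)) : ℕ := ∑ i ∈ desSet σ, (i + 1)

/-- The Eulerian polynomial `A_n(t) = Σ_{σ ∈ S_n} t^{exc(σ)}`. -/
noncomputable def eulerianExc (n : ℕ) : Polynomial ℚ :=
  ∑ σ : Equiv.Perm (Fin n), Polynomial.X ^ excNum σ

/-- The Eulerian polynomial `A_n(t) = Σ_{σ ∈ S_n} t^{des(σ)}`. -/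
noncomputable def eulerianDes (n : ℕ) : Polynomial ℚ :=
  ∑ σ : Equiv.Perm (Fin n), Polynomial.X ^ desNum σ

/-!
Worpitzky's identity `j ^ n = ∑_{σ ∈ S_n} C(j + n - 1 - des σ, n)` gives the theorem, because
`C(j + n - 1 - d, n)` is the coefficient of `t ^ j` in `t ^ (d + 1) / (1 - t) ^ (n + 1)`.

For Worpitzky's identity, sort the words `f : [n] → [j]`: `Tuple.sort f` is the unique `σ`
for which `f ∘ σ` is weakly increasing and strictly increasing across the descents of `σ`.
Adding to `(f ∘ σ) i` the number of non-descents of `σ` before `i` turns such maps into the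
strictly increasing maps `[n] → [j + n - 1 - des σ]`, of which there are
`C(j + n - 1 - des σ, n)`.
-/

lemma Fin.strictMono_intCast_val (n : ℕ) : StrictMono fun x : Fin n => ((x : ℕ) : ℤ) :=
  Nat.strictMono_cast.comp Fin.val_strictMono

variable {m : ℕ}

def MonotoneWithStrictSteps {α : Type*} [Preorder α] (D : Finset (Fin m))
    (g : Fin (m + 1) → α) : Prop :=
  ∀ i : Fin m, g i.castSucc ≤ g i.succ ∧ (i ∈ D → g i.castSucc < g i.succ)

namespace MonotoneWithStrictSteps

variable {α β : Type*} {D : Finset (Fin m)} {g : Fin (m + 1) → α}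

lemma monotone [Preorder α] (hg : MonotoneWithStrictSteps D g) : Monotone g :=
  Fin.monotone_iff_le_succ.2 fun i => (hg i).1

lemma comp_iff [LinearOrder α] [Preorder β] {f : α → β} (hf : StrictMono f) :
    MonotoneWithStrictSteps D (f ∘ g) ↔ MonotoneWithStrictSteps D g := by
  simp only [MonotoneWithStrictSteps, Function.comp_apply, hf.le_iff_le, hf.lt_iff_lt]

end MonotoneWithStrictSteps

def weakStepsBefore (D : Finset (Fin m)) (i : Fin (m + 1)) : ℕ := #{d ∈ Dᶜ | d.castSucc < i}

section weakStepsBefore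

variable (D : Finset (Fin m))

lemma weakStepsBefore_zero : weakStepsBefore D 0 = 0 := by
  simp [weakStepsBefore]

lemma weakStepsBefore_last : weakStepsBefore D (Fin.last m) = #Dᶜ := by
  simp [weakStepsBefore, Fin.castSucc_lt_last]

lemma weakStepsBefore_le_card_compl (i : Fin (m + 1)) : weakStepsBefore D i ≤ #Dᶜ :=
  card_filter_le _ _

lemma weakStepsBefore_succ (i : Fin m) :
    weakStepsBefore D i.succ = weakStepsBefore D i.castSucc + if i ∈ D then 0 else 1 := by
  simp only [weakStepsBefore, Fin.castSucc_lt_succ_iff, Fin.castSucc_lt_castSucc_iff]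
  split_ifs with hi
  · congr 1
    ext d
    simp only [mem_filter, mem_compl, le_iff_lt_or_eq]
    grind
  · rw [← card_insert_of_notMem (a := i) (by simp)]
    congr 1
    ext d
    simp only [mem_filter, mem_compl, mem_insert, le_iff_lt_or_eq]
    grind

lemma strictMono_add_weakStepsBefore_iff {u : Fin (m + 1) → ℤ} :
    StrictMono (fun i => u i + weakStepsBefore D i) ↔ MonotoneWithStrictSteps D u := by
  rw [Fin.strictMono_iff_lt_succ]
  refine forall_congr' fun i => ?_
  rw [weakStepsBefore_succ]
  split_ifs with hi <;> simp [hi] <;> omega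

lemma StrictMono.monotoneWithStrictSteps_sub_weakStepsBefore {v : Fin (m + 1) → ℤ}
    (hv : StrictMono v) : MonotoneWithStrictSteps D (fun i => v i - weakStepsBefore D i) :=
  (strictMono_add_weakStepsBefore_iff D).1 (by simpa using hv)

variable {j : ℕ}

lemma weakStepsBefore_le_apply_and_sub_lt (h : Fin (m + 1) ↪o Fin (j + #Dᶜ)) (i : Fin (m + 1)) :
    weakStepsBefore D i ≤ h i ∧ h i - weakStepsBefore D i < j := by
  have hmono := (((Fin.strictMono_intCast_val _).comp h.strictMono)
    |>.monotoneWithStrictSteps_sub_weakStepsBefore D).monotone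
  have h0 := hmono (Fin.zero_le i)
  have hlast := hmono (Fin.le_last i)
  simp only [Function.comp_apply, weakStepsBefore_zero, weakStepsBefore_last] at h0 hlast
  have := (h (Fin.last m)).isLt
  omega

def shiftEquiv :
    {g : Fin (m + 1) → Fin j // MonotoneWithStrictSteps D g} ≃
      (Fin (m + 1) ↪o Fin (j + #Dᶜ)) where
  toFun g := OrderEmbedding.ofStrictMono
    (fun i => ⟨g.1 i + weakStepsBefore D i, by
      have := weakStepsBefore_le_card_compl D i; omega⟩) fun a b hab => by
    have hg := (MonotoneWithStrictSteps.comp_iff (Fin.strictMono_intCast_val j)).2 g.2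
    have := (strictMono_add_weakStepsBefore_iff D).2 hg hab
    exact Fin.mk_lt_mk.2 (by simp only [Function.comp_apply] at this; omega)
  invFun h :=
    ⟨fun i => ⟨h i - weakStepsBefore D i, (weakStepsBefore_le_apply_and_sub_lt D h i).2⟩, by
      rw [← MonotoneWithStrictSteps.comp_iff (Fin.strictMono_intCast_val j)]
      convert ((Fin.strictMono_intCast_val _).comp h.strictMono
        |>.monotoneWithStrictSteps_sub_weakStepsBefore D) using 2 with i
      simp [(weakStepsBefore_le_apply_and_sub_lt D h i).1]⟩
  left_inv g := by ext i; exact Nat.add_sub_cancel ..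
  right_inv h := by ext i; exact Nat.sub_add_cancel (weakStepsBefore_le_apply_and_sub_lt D h i).1

lemma card_monotoneWithStrictSteps :
    Nat.card {g : Fin (m + 1) → Fin j // MonotoneWithStrictSteps D g} =
      (j + (m - #D)).choose (m + 1) := by
  rw [Nat.card_congr (shiftEquiv D), Nat.card_congr Set.powersetCard.ofFinEmbEquiv,
    Set.powersetCard.card, Nat.card_fin, card_compl, Fintype.card_fin]

end weakStepsBefore

def descents (σ : Perm (Fin (m + 1))) : Finset (Fin m) := {i | σ i.succ < σ i.castSucc}

lemma card_descents (σ : Perm (Fin (m + 1))) : #(descents σ) = desNum σ := by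
  have : desSet σ = (descents σ).map Fin.valEmbedding := by
    ext i
    simp only [desSet, descents, permVal, mem_filter, mem_map, mem_range, mem_univ, true_and,
      Nat.add_sub_cancel, Fin.valEmbedding_apply]
    constructor
    · rintro ⟨hi, hdes⟩
      rw [dif_pos (by omega), dif_pos (by omega)] at hdes
      exact ⟨⟨i, hi⟩, hdes, rfl⟩
    · rintro ⟨i, hdes, rfl⟩
      rw [dif_pos (by omega), dif_pos (by omega)]
      exact ⟨i.isLt, hdes⟩
  rw [desNum, this, card_map]

lemma sort_eq_iff_monotoneWithStrictSteps {α : Type*} [LinearOrder α] (f : Fin (m + 1) → α)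
    (σ : Perm (Fin (m + 1))) :
    Tuple.sort f = σ ↔ MonotoneWithStrictSteps (descents σ) (f ∘ σ) := by
  rw [eq_comm, Tuple.eq_sort_iff', Fin.strictMono_iff_lt_succ]
  refine forall_congr' fun i => ?_
  have hne : σ i.castSucc ≠ σ i.succ := σ.injective.ne Fin.castSucc_lt_succ.ne
  show toLex (f (σ i.castSucc), σ i.castSucc) < toLex (f (σ i.succ), σ i.succ) ↔ _
  simp only [Prod.Lex.toLex_lt_toLex', descents, mem_filter, mem_univ, true_and,
    Function.comp_apply]
  grind

lemma card_sort_eq (j : ℕ) (σ : Perm (Fin (m + 1))) :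
    Nat.card {f : Fin (m + 1) → Fin j // Tuple.sort f = σ} =
      (j + (m - desNum σ)).choose (m + 1) := by
  rw [← card_descents, ← card_monotoneWithStrictSteps]
  exact Nat.card_congr <| (σ.symm.arrowCongr (Equiv.refl _)).subtypeEquiv fun f =>
    sort_eq_iff_monotoneWithStrictSteps f σ

theorem pow_eq_sum_choose_desNum (n j : ℕ) :
    j ^ n = ∑ σ : Perm (Fin n), (j + (n - 1 - desNum σ)).choose n := by
  cases n with
  | zero => simp
  | succ m =>
    calc j ^ (m + 1) = Nat.card (Fin (m + 1) → Fin j) := by simp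
      _ = ∑ σ : Perm (Fin (m + 1)),
            Nat.card {f : Fin (m + 1) → Fin j // Tuple.sort f = σ} := by
        rw [← Nat.card_sigma]
        exact Nat.card_congr (Equiv.sigmaFiberEquiv _).symm
      _ = _ := by simp only [card_sort_eq, Nat.add_sub_cancel]

lemma desNum_le {n : ℕ} (σ : Perm (Fin n)) : desNum σ ≤ n - 1 :=
  (card_filter_le _ _).trans (card_range _).le

section PowerSeries

open PowerSeries

variable {R : Type*} [Semiring R]

lemma coeff_X_pow_succ_mul_mk_choose {n d j : ℕ} (hd : d ≤ n - 1) (hj : j ≠ 0) :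
    coeff j (X ^ (d + 1) * PowerSeries.mk fun i => ((n + i).choose n : R) : R⟦X⟧) =
      (j + (n - 1 - d)).choose n := by
  rw [coeff_X_pow_mul', coeff_mk]
  split_ifs with h
  · rcases eq_or_ne n 0 with rfl | hn
    · simp
    · congr 2; omega
  · rw [Nat.choose_eq_zero_of_lt (by omega), Nat.cast_zero]

lemma mk_pow_eq_sum_X_pow_succ_desNum_mul (n : ℕ) :
    PowerSeries.mk (fun j => if j = 0 then 0 else (j : R) ^ n) =
      ∑ σ : Perm (Fin n),
        X ^ (desNum σ + 1) * PowerSeries.mk fun i => ((n + i).choose n : R) := by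
  ext j
  rcases eq_or_ne j 0 with rfl | hj
  · simp
  · simp only [coeff_mk, if_neg hj, map_sum, coeff_X_pow_succ_mul_mk_choose (desNum_le _) hj]
    rw [← Nat.cast_pow, pow_eq_sum_choose_desNum, Nat.cast_sum]

end PowerSeries

/-- For any positive integer `k`, `t A_{k−1}(t)/(1−t)^k = Σ_{j≥1} j^{k−1} t^j`, i.e.
`t A_{k−1}(t) = (Σ_{j≥1} j^{k−1} t^j) (1−t)^k` as formal power series, where `A_{k-1}` is
the `(k-1)`-st Eulerian polynomial. -/
theorem eulerian_generating_series (k : ℕ) (hk : 0 < k) :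
    ((Polynomial.X * eulerianDes (k - 1) : Polynomial ℚ) : PowerSeries ℚ) =
      PowerSeries.mk (fun j => if j = 0 then 0 else (j : ℚ) ^ (k - 1)) *
        (1 - PowerSeries.X) ^ k := by
  obtain ⟨n, rfl⟩ : ∃ n, k = n + 1 := ⟨k - 1, by omega⟩
  rw [Nat.add_sub_cancel, mk_pow_eq_sum_X_pow_succ_desNum_mul, sum_mul]
  simp_rw [mul_assoc, PowerSeries.mk_add_choose_mul_one_sub_pow_eq_one, mul_one]
  rw [eulerianDes, mul_sum, ← Polynomial.coeToPowerSeries.ringHom_apply, map_sum]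
  simp [pow_succ']
end

section
/- Fix positive integers n, k, d with n = kd, and let τ = γ_n^{-k} where γ_n = (1,2,...,n) is the n-cycle in S_n. Then every σ in the centralizer C_{S_n}(τ) can be written uniquely as σ = τ_1^{e_1}⋯τ_k^{e_k} ρ̂, where τ_i is the d-cycle of τ with support X_i = {j ∈ [n] : j ≡ i mod k}, ρ ∈ S_k, e_1,...,e_k ∈ {0,...,d−1}, and ρ̂ ∈ S_n maps r + qk to ρ(r) + qk for r ∈ [k], 0 ≤ q ≤ d−1. Moreover exc(σ) = d·E_0 + Σ_{i=1}^k e_i, where E_0 is the number of r ∈ [k] with e_r = 0 and r ∈ Exc(ρ). -/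
open Finset Equiv

/-- The permutation of `Fin d × Fin k` sending `(q, r) ↦ (q − e r, ρ r)`. Under the
identification of `j ∈ Fin (d*k)` with `(q, r)` where `j = r + q·k` (so `r = j mod k`),
this is the element `τ₁^{e₁} ⋯ τ_k^{e_k} ρ̂` of the centralizer of `τ = γ_n^{-k}`, where
`τᵢ` is the `d`-cycle of `τ` on the congruence class `{j : j ≡ i mod k}` and
`ρ̂` maps `r + q·k` to `ρ(r) + q·k`. -/
def blockPerm {d k : ℕ} [NeZero d] (e : Fin k → Fin d) (ρ : Equiv.Perm (Fin k)) :
    Equiv.Perm (Fin d × Fin k) where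
  toFun x := (x.1 - e x.2, ρ x.2)
  invFun x := (x.1 + e (ρ⁻¹ x.2), ρ⁻¹ x.2)
  left_inv x := by simp
  right_inv x := by simp

/-- The element `τ₁^{e₁} ⋯ τ_k^{e_k} ρ̂` of `S_n`, `n = d·k`, obtained from `blockPerm`
via the identification `Fin d × Fin k ≃ Fin (d*k)`, `(q, r) ↦ r + q·k`. -/
def Psi {d k : ℕ} [NeZero d] (e : Fin k → Fin d) (ρ : Equiv.Perm (Fin k)) :
    Equiv.Perm (Fin (d * k)) :=
  Equiv.permCongr finProdFinEquiv (blockPerm e ρ)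


/-! Under `finProdFinEquiv : (q, r) ↦ r + k q` the rotation `(finRotate (d * k)) ^ k` becomes the
shift `(q, r) ↦ (q + 1, r)`, i.e. `τ = Psi 1 1`. A permutation commuting with this shift is
determined by its values on `{0} × Fin k`, which forces the shape `(q, r) ↦ (q - e r, ρ r)`.
Positions compare lexicographically in `(q, r)`, so `(q, r)` is an excedance of `Psi e ρ` iff
`q < q - e r` (that is, `q < e r`), or `e r = 0` and `r < ρ r`: for each `r` this gives `e r`
excedances, or `d` of them when `e r = 0` and `r ∈ Exc ρ`. -/

lemma val_finRotate_pow_apply {n : ℕ} (m : ℕ) (i : Fin n) :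
    ((finRotate n ^ m) i : ℕ) = (i + m) % n := by
  induction m with
  | zero => simp [Nat.mod_eq_of_lt i.isLt]
  | succ m ih =>
    have := i.neZero
    rw [pow_succ', Perm.mul_apply, finRotate_apply, Fin.val_add, ih, Fin.val_one',
      Nat.mod_add_mod, Nat.add_mod_mod, add_assoc]

lemma add_mul_lt_add_mul_iff_lex {k a b q q' : ℕ} (ha : a < k) (hb : b < k) :
    a + k * q < b + k * q' ↔ q < q' ∨ q = q' ∧ a < b := by
  rcases lt_trichotomy q q' with h | rfl | h
  · have : k * q + k ≤ k * q' := by nlinarith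
    omega
  · omega
  · have : k * q' + k ≤ k * q := by nlinarith
    omega

lemma card_filter_lt_or_eq_zero_and {d : ℕ} [NeZero d] (c : Fin d) (P : Prop) [Decidable P] :
    #{q : Fin d | q < c ∨ c = 0 ∧ P} = d * (if c = 0 ∧ P then 1 else 0) + c := by
  by_cases h : c = 0 ∧ P
  · simp [h]
  · have : ({q : Fin d | q < c ∨ c = 0 ∧ P} : Finset (Fin d)) = Iio c := by
      ext q; simp only [mem_filter, mem_univ, true_and, mem_Iio]; tauto
    rw [this, Fin.card_Iio, if_neg h, mul_zero, zero_add]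

lemma excNum_permCongr_finProdFinEquiv {m n : ℕ} (π : Perm (Fin m × Fin n)) :
    excNum (finProdFinEquiv.permCongr π) =
      ∑ r : Fin n, #{q : Fin m | (finProdFinEquiv (q, r) : ℕ) < finProdFinEquiv (π (q, r))} := by
  simp only [excNum, card_filter]
  rw [← finProdFinEquiv.sum_comp, Fintype.sum_prod_type, sum_comm]
  simp

section
variable {d k : ℕ} [NeZero d]

@[simp]
lemma blockPerm_apply (e : Fin k → Fin d) (ρ : Perm (Fin k)) (x : Fin d × Fin k) :
    blockPerm e ρ x = (x.1 - e x.2, ρ x.2) :=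
  rfl

lemma blockPerm_inv_apply (e : Fin k → Fin d) (ρ : Perm (Fin k)) (x : Fin d × Fin k) :
    (blockPerm e ρ)⁻¹ x = (x.1 + e (ρ⁻¹ x.2), ρ⁻¹ x.2) :=
  rfl

lemma blockPerm_injective :
    Function.Injective fun p : (Fin k → Fin d) × Perm (Fin k) => blockPerm p.1 p.2 := by
  rintro ⟨e, ρ⟩ ⟨e', ρ'⟩ h
  have h0 (r : Fin k) := DFunLike.congr_fun h (0, r)
  simp only [blockPerm_apply, zero_sub, Prod.mk.injEq, neg_inj] at h0
  exact Prod.ext (funext fun r => (h0 r).1) (Equiv.ext fun r => (h0 r).2)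

lemma Psi_injective :
    Function.Injective fun p : (Fin k → Fin d) × Perm (Fin k) => Psi p.1 p.2 :=
  (permCongr finProdFinEquiv).injective.comp blockPerm_injective

open Fin.NatCast in
lemma apply_eq_of_commute_blockPerm_one {π : Perm (Fin d × Fin k)}
    (h : Commute π (blockPerm (fun _ => 1) 1)) (q : Fin d) (r : Fin k) :
    π (q, r) = ((π (0, r)).1 + q, (π (0, r)).2) := by
  have step (q : Fin d) : π (q + 1, r) = ((π (q, r)).1 + 1, (π (q, r)).2) := by
    simpa only [Perm.mul_apply, blockPerm_inv_apply, inv_one, Perm.one_apply] using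
      DFunLike.congr_fun h.inv_right (q, r)
  have (m : ℕ) : π ((m : Fin d), r) = ((π (0, r)).1 + m, (π (0, r)).2) := by
    induction m with
    | zero => simp
    | succ m ih => rw [Nat.cast_succ, step, ih, add_assoc]
  simpa only [Fin.cast_val_eq_self] using this q

lemma exists_blockPerm_eq_of_commute {π : Perm (Fin d × Fin k)}
    (h : Commute π (blockPerm (fun _ => 1) 1)) : ∃ e ρ, π = blockPerm e ρ := by
  set c := fun r => (π (0, r)).1
  set ρ := fun r => (π (0, r)).2
  have hπ (q : Fin d) (r : Fin k) : π (q, r) = (c r + q, ρ r) :=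
    apply_eq_of_commute_blockPerm_one h q r
  have hρ : Function.Injective ρ := by
    intro r r' hr
    have h1 : π (-c r, r) = π (-c r', r') := by simp only [hπ, add_neg_cancel, hr]
    exact congrArg Prod.snd (π.injective h1)
  refine ⟨fun r => -c r, Equiv.ofBijective ρ (Finite.injective_iff_bijective.mp hρ), ?_⟩
  ext1 ⟨q, r⟩
  rw [hπ, blockPerm_apply, sub_neg_eq_add, add_comm, Equiv.ofBijective_apply]

lemma finRotate_pow_finProdFinEquiv (q : Fin d) (r : Fin k) :
    (finRotate (d * k) ^ k) (finProdFinEquiv (q, r)) = finProdFinEquiv (q + 1, r) := by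
  have hk : 0 < k := r.pos
  ext
  -- `Nat.mod_mul` splits `x % (k * d)` into the digits `x % k` and `x / k % d`.
  rw [val_finRotate_pow_apply, finProdFinEquiv_apply_val, finProdFinEquiv_apply_val, Fin.val_add,
    Fin.val_one', Nat.add_mod_mod, mul_comm d, Nat.mod_mul, add_assoc, ← mul_add_one,
    Nat.add_mul_mod_self_left, Nat.add_mul_div_left _ _ hk, Nat.mod_eq_of_lt r.isLt,
    Nat.div_eq_of_lt r.isLt, zero_add]

lemma Psi_one_one_eq_inv_finRotate_pow : Psi (fun _ => 1) 1 = (finRotate (d * k) ^ k)⁻¹ := by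
  refine eq_inv_of_mul_eq_one_left (Equiv.ext fun j => ?_)
  obtain ⟨⟨q, r⟩, rfl⟩ := finProdFinEquiv.surjective j
  simp [Psi, finRotate_pow_finProdFinEquiv]

lemma exists_Psi_eq_of_commute {σ : Perm (Fin (d * k))}
    (h : Commute σ (finRotate (d * k) ^ k)⁻¹) : ∃ e ρ, σ = Psi e ρ := by
  obtain ⟨π, rfl⟩ := finProdFinEquiv.permCongrHom.surjective σ
  rw [← Psi_one_one_eq_inv_finRotate_pow, Psi, ← permCongrHom_coe,
    commute_map_iff finProdFinEquiv.permCongrHom.injective] at h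
  obtain ⟨e, ρ, rfl⟩ := exists_blockPerm_eq_of_commute h
  exact ⟨e, ρ, rfl⟩

lemma lt_blockPerm_apply_iff (e : Fin k → Fin d) (ρ : Perm (Fin k)) (q : Fin d) (r : Fin k) :
    (finProdFinEquiv (q, r) : ℕ) < finProdFinEquiv (blockPerm e ρ (q, r)) ↔
      q < e r ∨ e r = 0 ∧ (r : ℕ) < ρ r := by
  rw [finProdFinEquiv_apply_val, finProdFinEquiv_apply_val, blockPerm_apply,
    add_mul_lt_add_mul_iff_lex r.isLt (ρ r).isLt, ← Fin.lt_def, Fin.lt_sub_iff,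
    Fin.val_eq_val, eq_comm, sub_eq_self]

lemma excNum_Psi (e : Fin k → Fin d) (ρ : Perm (Fin k)) :
    excNum (Psi e ρ) =
      d * #{r : Fin k | e r = 0 ∧ (r : ℕ) < ρ r} + ∑ i, (e i : ℕ) := by
  simp only [Psi, excNum_permCongr_finProdFinEquiv, lt_blockPerm_apply_iff,
    card_filter_lt_or_eq_zero_and, sum_add_distrib, ← mul_sum, sum_boole, Nat.cast_id]

end

theorem centralizer_decomposition_exc_general (d k : ℕ) [NeZero d]
    (σ : Equiv.Perm (Fin (d * k)))
    (hσ : σ * (finRotate (d * k) ^ k)⁻¹ = (finRotate (d * k) ^ k)⁻¹ * σ) :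
    (∃! p : (Fin k → Fin d) × Equiv.Perm (Fin k), σ = Psi p.1 p.2) ∧
    ∀ (e : Fin k → Fin d) (ρ : Equiv.Perm (Fin k)), σ = Psi e ρ →
      excNum σ =
        d * (Finset.univ.filter fun r : Fin k => e r = 0 ∧ (r : ℕ) < (ρ r : ℕ)).card +
          ∑ i, (e i : ℕ) := by
  obtain ⟨e₀, ρ₀, rfl⟩ := exists_Psi_eq_of_commute hσ
  refine ⟨⟨(e₀, ρ₀), rfl, fun p hp => Psi_injective hp.symm⟩, fun e ρ h => ?_⟩
  rw [h, excNum_Psi]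

/-- Canonical form of elements of the centralizer of `τ = γ_n^{-k}` in `S_n`, `n = k·d`:
every `σ` commuting with `τ` can be written uniquely as `σ = τ₁^{e₁} ⋯ τ_k^{e_k} ρ̂`
with `ρ ∈ S_k` and `e₁, …, e_k ∈ {0, …, d−1}`; moreover for this decomposition
`exc(σ) = d·E₀ + Σᵢ eᵢ`, where `E₀ = #{r : e_r = 0 and r ∈ Exc(ρ)}`. -/
theorem centralizer_decomposition_exc (d k : ℕ) [NeZero d] [NeZero k]
    (σ : Equiv.Perm (Fin (d * k)))
    (hσ : σ * (finRotate (d * k) ^ k)⁻¹ = (finRotate (d * k) ^ k)⁻¹ * σ) :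
    (∃! p : (Fin k → Fin d) × Equiv.Perm (Fin k), σ = Psi p.1 p.2) ∧
    ∀ (e : Fin k → Fin d) (ρ : Equiv.Perm (Fin k)), σ = Psi e ρ →
      excNum σ =
        d * (Finset.univ.filter fun r : Fin k => e r = 0 ∧ (r : ℕ) < (ρ r : ℕ)).card +
          ∑ i, (e i : ℕ) :=
  centralizer_decomposition_exc_general d k σ hσ
end

section
/- Let n = dk and suppose σ ∈ C_{S_n}(γ_n^k) has the property that Φ(σ) ∈ S_k is a k-cycle. Write σ = τ_1^{e_1}⋯τ_k^{e_k} ρ̂ as in the canonical decomposition. Then all cycles of σ have the same length sk, where s is the order of k·(e_1 + ⋯ + e_k) in ℤ/nℤ. -/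
open Finset Equiv

/-!
Write a point of `Fin (d * k)` as `(q, r) ∈ Fin d × Fin k`. Then
`σ^m (q, r) = (q - ∑_{j<m} e (ρ^j r), ρ^m r)`. Since `ρ` is a `k`-cycle, `σ^m` fixes `(q, r)`
only if `m = k s`, and the first coordinate then moves by `s · ∑ᵢ eᵢ` in `ℤ/dℤ`, which
vanishes iff `d ∣ s ∑ᵢ eᵢ`, i.e. iff `s · k ∑ᵢ eᵢ = 0` in `ℤ/dkℤ`.
-/

open Function

theorem Equiv.minimalPeriod_permCongr {α β : Type*} (f : α ≃ β) (p : Perm α) (x : α) :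
    minimalPeriod (f.permCongr p) (f x) = minimalPeriod p x := by
  have hf : Semiconj f p (f.permCongr p) := fun y => by simp
  have hf_symm : Semiconj f.symm (f.permCongr p) p := fun y => by simp
  refine minimalPeriod_eq_minimalPeriod_iff.2 fun n => ⟨fun h => ?_, fun h => h.map hf⟩
  simpa using h.map hf_symm

theorem ZMod.nsmul_natCast_mul_eq_zero_iff {k : ℕ} (hk : 0 < k) (d s a : ℕ) :
    s • ((k * a : ℕ) : ZMod (d * k)) = 0 ↔ d ∣ s * a := by
  rw [nsmul_eq_mul, ← Nat.cast_mul, ZMod.natCast_eq_zero_iff,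
    show s * (k * a) = s * a * k by ring, Nat.mul_dvd_mul_iff_right hk]

open Fin.CommRing in
theorem Fin.nsmul_sum_eq_zero_iff {ι : Type*} [Fintype ι] {d : ℕ} [NeZero d] (s : ℕ)
    (f : ι → Fin d) : s • ∑ i, f i = 0 ↔ d ∣ s * ∑ i, (f i : ℕ) := by
  rw [← Fin.natCast_eq_zero, Nat.cast_mul, Nat.cast_sum]
  simp only [Fin.cast_val_eq_self, nsmul_eq_mul]

section Transitive

variable {α M : Type*} [Fintype α] [AddCommMonoid M] {ρ : Perm α}

theorem Equiv.Perm.bijective_pow_apply_of_transitive (hρ : ∀ x y : α, ∃ m : ℕ, (ρ ^ m) x = y)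
    (r : α) : Bijective fun j : Fin (minimalPeriod ρ r) => (ρ ^ (j : ℕ)) r := by
  have hper : IsPeriodicPt ρ (orderOf ρ) r := by
    rw [IsPeriodicPt, IsFixedPt, Perm.iterate_eq_pow, pow_orderOf_eq_one, Perm.one_apply]
  have hpos : 0 < minimalPeriod ρ r := hper.minimalPeriod_pos (orderOf_pos ρ)
  refine ⟨fun i j h => Fin.ext ?_, fun y => ?_⟩
  · exact iterate_injOn_Iio_minimalPeriod i.2 j.2 (by simpa [Perm.iterate_eq_pow] using h)
  · obtain ⟨m, rfl⟩ := hρ r y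
    exact ⟨⟨m % _, Nat.mod_lt _ hpos⟩, by
      simp only [← Perm.iterate_eq_pow, iterate_mod_minimalPeriod_eq]⟩

theorem Equiv.Perm.minimalPeriod_eq_card_of_transitive
    (hρ : ∀ x y : α, ∃ m : ℕ, (ρ ^ m) x = y) (r : α) :
    minimalPeriod ρ r = Fintype.card α := by
  simpa using Fintype.card_of_bijective (bijective_pow_apply_of_transitive hρ r)

theorem Equiv.Perm.sum_range_card_mul_pow_apply_of_transitive
    (hρ : ∀ x y : α, ∃ m : ℕ, (ρ ^ m) x = y) (f : α → M) (r : α) (s : ℕ) :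
    ∑ j ∈ Finset.range (Fintype.card α * s), f ((ρ ^ j) r) = s • ∑ i, f i := by
  have hcard := minimalPeriod_eq_card_of_transitive hρ r
  induction s with
  | zero => simp
  | succ s ih =>
    have hshift (j : ℕ) : (ρ ^ (Fintype.card α * s + j)) r = (ρ ^ j) r := by
      rw [add_comm, pow_add, Perm.mul_apply, ← Perm.iterate_eq_pow ρ (_ * s), ← hcard,
        ((isPeriodicPt_minimalPeriod ρ r).mul_const s).eq]
    have hblock : ∑ j ∈ Finset.range (Fintype.card α), f ((ρ ^ j) r) = ∑ i, f i := by
      rw [← hcard, Finset.sum_range]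
      exact Fintype.sum_bijective _ (bijective_pow_apply_of_transitive hρ r) _ _ fun _ => rfl
    rw [Nat.mul_succ, Finset.sum_range_add, ih, succ_nsmul]
    simp only [hshift, hblock]

end Transitive

section BlockPerm

variable {d k : ℕ} [NeZero d] (e : Fin k → Fin d) (ρ : Perm (Fin k))

theorem blockPerm_iterate (m : ℕ) (q : Fin d) (r : Fin k) :
    (blockPerm e ρ)^[m] (q, r) = (q - ∑ j ∈ Finset.range m, e ((ρ ^ j) r), (ρ ^ m) r) := by
  induction m with
  | zero => simp
  | succ m ih =>
    rw [iterate_succ_apply', ih]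
    simp [blockPerm, Finset.sum_range_succ, pow_succ', sub_sub]

theorem isPeriodicPt_blockPerm_iff (m : ℕ) (q : Fin d) (r : Fin k) :
    IsPeriodicPt (blockPerm e ρ) m (q, r) ↔
      IsPeriodicPt ρ m r ∧ ∑ j ∈ Finset.range m, e ((ρ ^ j) r) = 0 := by
  rw [IsPeriodicPt, IsFixedPt, blockPerm_iterate, Prod.mk.injEq, sub_eq_self, and_comm,
    IsPeriodicPt, IsFixedPt, Perm.iterate_eq_pow]

theorem minimalPeriod_blockPerm (hρ : ∀ x y : Fin k, ∃ m : ℕ, (ρ ^ m) x = y)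
    (x : Fin d × Fin k) :
    minimalPeriod (blockPerm e ρ) x =
      addOrderOf ((↑(k * ∑ i, (e i : ℕ)) : ZMod (d * k))) * k := by
  obtain ⟨q, r⟩ := x
  set t := addOrderOf ((↑(k * ∑ i, (e i : ℕ)) : ZMod (d * k)))
  have hsum (s : ℕ) : ∑ j ∈ Finset.range (k * s), e ((ρ ^ j) r) = 0 ↔ t ∣ s := by
    have := ρ.sum_range_card_mul_pow_apply_of_transitive hρ e r s
    rw [Fintype.card_fin] at this
    rw [this, Fin.nsmul_sum_eq_zero_iff, addOrderOf_dvd_iff_nsmul_eq_zero,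
      ZMod.nsmul_natCast_mul_eq_zero_iff r.pos]
  refine Nat.dvd_right_iff_eq.1 fun m => ?_
  rw [← isPeriodicPt_iff_minimalPeriod_dvd, isPeriodicPt_blockPerm_iff,
    isPeriodicPt_iff_minimalPeriod_dvd, ρ.minimalPeriod_eq_card_of_transitive hρ,
    Fintype.card_fin]
  constructor
  · rintro ⟨⟨s, rfl⟩, h⟩
    rw [mul_comm k s]
    exact mul_dvd_mul_right ((hsum s).1 h) k
  · rintro ⟨c, rfl⟩
    rw [show t * k * c = k * (t * c) by ring]
    exact ⟨dvd_mul_right k _, (hsum _).2 (dvd_mul_right t c)⟩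

end BlockPerm

theorem cycles_of_kcycle_centralizer_element_general (d k : ℕ) [NeZero d]
    (e : Fin k → Fin d) (ρ : Equiv.Perm (Fin k))
    (hρ : ∀ x y : Fin k, ∃ m : ℕ, (ρ ^ m) x = y) :
    ∀ x : Fin (d * k),
      Function.minimalPeriod (⇑(Psi e ρ)) x =
        addOrderOf ((↑(k * ∑ i, (e i : ℕ)) : ZMod (d * k))) * k := by
  intro x
  rw [← finProdFinEquiv.apply_symm_apply x, Psi, Equiv.minimalPeriod_permCongr]
  exact minimalPeriod_blockPerm e ρ hρ _

/-- Let `n = d·k` and let `σ = τ₁^{e₁} ⋯ τ_k^{e_k} ρ̂` be an element of the centralizer of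
`γ_n^k` (in canonical form), with `Φ(σ) = ρ` a `k`-cycle.  Then all cycles of `σ` have the
same length `s·k`, where `s` is the additive order of `k·(e₁ + ⋯ + e_k)` in `ℤ/nℤ`:
the cycle of `σ` through any point has length `s·k`. -/
theorem cycles_of_kcycle_centralizer_element (d k : ℕ) [NeZero d] [NeZero k]
    (e : Fin k → Fin d) (ρ : Equiv.Perm (Fin k))
    (hρ : ∀ x y : Fin k, ∃ m : ℕ, (ρ ^ m) x = y) :
    ∀ x : Fin (d * k),
      Function.minimalPeriod (⇑(Psi e ρ)) x =
        addOrderOf ((↑(k * ∑ i, (e i : ℕ)) : ZMod (d * k))) * k :=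
  cycles_of_kcycle_centralizer_element_general d k e ρ hρ
end

section
/- Let n = dk and suppose σ ∈ C_{S_n}(γ_n^k) with Φ(σ) a k-cycle, and suppose all cycles of σ have length r (so σ has cycle type r^{n/r} and k | r | n). Then gcd(exc(σ), d) = n/r. -/
open Finset Equiv

/-- The permutation `Φ(σ)` of the congruence classes mod `k` induced by an element `σ` of
the centralizer of `γ_n^k` (`n = d·k`): the class of `j` is `j mod k`, and `Φ(σ)` sends
the class `r` to the class of `σ(r)`.  (For arbitrary `σ` this is just a function on
classes; for `σ` in the centralizer it is the induced permutation.) -/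
def phiFun {d k : ℕ} [NeZero d] [NeZero k] (σ : Equiv.Perm (Fin (d * k))) (r : Fin k) :
    Fin k :=
  ⟨(σ ⟨(r : ℕ), lt_of_lt_of_le r.2 (Nat.le_mul_of_pos_left k
      (Nat.pos_of_ne_zero (NeZero.ne d)))⟩ : ℕ) % k,
    Nat.mod_lt _ (Nat.pos_of_ne_zero (NeZero.ne k))⟩

/-! Write `σ x = x + δ x` in `ℤ/n`. Since `σ` commutes with `x ↦ x + k`, the displacement `δ`
only depends on `x mod k`; since `Φ(σ)` is a `k`-cycle, `k` consecutive steps of `σ` meet every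
class mod `k` once, so `σ^k` is the translation by `S = Σ_{j<k} δ j` and every cycle of `σ` has
length `k · ord S`. Counting the representatives of `δ` in `[0, n)` gives
`Σ_x δ x = n · def σ`, where `def σ = #{x | σ x < x}`, and also `d · S`; hence `S = k · def σ`,
`ord S = d / gcd(d, def σ)` and `n / r = gcd(d, def σ)`. Finally `exc + fix + def = n`, and
as all cycles have the same length, `fix = 0` unless `σ = 1`, so `gcd(exc, d) = gcd(def, d)`. -/

namespace Function

variable {α : Type*} [Fintype α] {f : α → α}

theorem image_iterate_range_minimalPeriod [DecidableEq α] (hf : ∀ x y, ∃ m, f^[m] x = y)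
    (x : α) : (range (minimalPeriod f x)).image (fun t ↦ f^[t] x) = univ := by
  obtain ⟨m, hm⟩ := hf (f x) x
  have hpos : 0 < minimalPeriod f x :=
    IsPeriodicPt.minimalPeriod_pos m.succ_pos <| by
      rwa [IsPeriodicPt, IsFixedPt, iterate_succ_apply]
  refine eq_univ_of_forall fun y ↦ ?_
  obtain ⟨m', rfl⟩ := hf x y
  exact mem_image.2 ⟨m' % minimalPeriod f x, mem_range.2 (Nat.mod_lt _ hpos),
    iterate_mod_minimalPeriod_eq⟩

theorem minimalPeriod_eq_card_of_forall_exists_iterate_eq (hf : ∀ x y, ∃ m, f^[m] x = y)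
    (x : α) : minimalPeriod f x = Fintype.card α := by
  classical
  rw [← card_univ, ← image_iterate_range_minimalPeriod hf x, card_image_of_injOn, card_range]
  rw [coe_range]
  exact iterate_injOn_Iio_minimalPeriod

theorem sum_iterate_range_card {M : Type*} [AddCommMonoid M] (hf : ∀ x y, ∃ m, f^[m] x = y)
    (g : α → M) (x : α) : ∑ t ∈ range (Fintype.card α), g (f^[t] x) = ∑ y, g y := by
  classical
  rw [← minimalPeriod_eq_card_of_forall_exists_iterate_eq hf x,
    ← sum_image (f := g) (by rw [coe_range]; exact iterate_injOn_Iio_minimalPeriod),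
    image_iterate_range_minimalPeriod hf x]

end Function

theorem finRotate_pow_apply_val {n : ℕ} (m : ℕ) (x : Fin n) :
    ((finRotate n ^ m) x : ℕ) = (x + m) % n := by
  rcases n with _ | n
  · exact x.elim0
  induction m with
  | zero => simp [Nat.mod_eq_of_lt x.2]
  | succ m ih =>
    rw [pow_succ', Perm.mul_apply, finRotate_apply, Fin.val_add, ih, Fin.val_one', ← Nat.add_mod,
      Nat.add_assoc]

theorem natCast_finRotate_pow_apply {n : ℕ} (m : ℕ) (x : Fin n) :
    (((finRotate n ^ m) x : ℕ) : ZMod n) = (x : ℕ) + m := by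
  rw [finRotate_pow_apply_val, ZMod.natCast_mod, Nat.cast_add]

theorem modNat_finRotate_pow_mul {d k : ℕ} (t : ℕ) (x : Fin (d * k)) :
    ((finRotate (d * k) ^ (k * t)) x).modNat = x.modNat := by
  ext
  rw [Fin.coe_modNat, Fin.coe_modNat, finRotate_pow_apply_val,
    Nat.mod_mod_of_dvd _ (dvd_mul_left k d), Nat.add_mul_mod_self_left]

theorem exists_finRotate_pow_mul_apply_eq {d k : ℕ} {x y : Fin (d * k)}
    (h : x.modNat = y.modNat) : ∃ t, (finRotate (d * k) ^ (k * t)) x = y := by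
  have hmod : (x : ℕ) % k = (y : ℕ) % k := by simpa [Fin.ext_iff] using h
  have hdvd : k ∣ y + d * k - x :=
    Nat.dvd_of_mod_eq_zero <| Nat.sub_mod_eq_zero_of_mod_eq <| by
      rw [Nat.add_mul_mod_self_right, hmod]
  refine ⟨(y + d * k - x) / k, Fin.ext ?_⟩
  rw [finRotate_pow_apply_val, Nat.mul_div_cancel' hdvd,
    show (x : ℕ) + (y + d * k - x) = y + d * k by omega, Nat.add_mod_right, Nat.mod_eq_of_lt y.2]

section Displacement

variable {n : ℕ} (σ : Perm (Fin n))

def displacement (x : Fin n) : ZMod n := ((σ x : ℕ) : ZMod n) - (x : ℕ)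

def deficiencyNum : ℕ := #{i | (σ i : ℕ) < i}

theorem natCast_iterate_apply (m : ℕ) (x : Fin n) :
    ((σ^[m] x : ℕ) : ZMod n) = (x : ℕ) + ∑ t ∈ range m, displacement σ (σ^[t] x) := by
  simp only [displacement, ← Function.iterate_succ_apply' σ]
  rw [sum_range_sub (fun t ↦ ((σ^[t] x : ℕ) : ZMod n)), Function.iterate_zero_apply]
  ring

theorem val_displacement (x : Fin n) :
    ((displacement σ x).val : ℤ) =
      (σ x : ℕ) - (x : ℕ) + if (σ x : ℕ) < x then (n : ℤ) else 0 := by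
  have hx := x.2
  have hσx := (σ x).2
  split_ifs with h
  · have : displacement σ x = ((σ x + n - x : ℕ) : ZMod n) := by
      rw [displacement, Nat.cast_sub (by omega), Nat.cast_add, ZMod.natCast_self, add_zero]
    rw [this, ZMod.val_cast_of_lt (by omega)]
    omega
  · have : displacement σ x = ((σ x - x : ℕ) : ZMod n) := by
      rw [displacement, Nat.cast_sub (by omega)]
    rw [this, ZMod.val_cast_of_lt (by omega)]
    omega

theorem sum_val_displacement : ∑ x, (displacement σ x).val = n * deficiencyNum σ := by
  have hsum : ∑ x : Fin n, ((σ x : ℕ) : ℤ) = ∑ x : Fin n, ((x : ℕ) : ℤ) :=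
    Equiv.sum_comp σ fun x ↦ ((x : ℕ) : ℤ)
  zify
  simp only [val_displacement, sum_add_distrib, sum_sub_distrib, hsum, sub_self, zero_add,
    sum_ite, sum_const_zero, add_zero, sum_const, nsmul_eq_mul, deficiencyNum]
  ring

theorem excNum_add_fixNum_add_deficiencyNum : excNum σ + fixNum σ + deficiencyNum σ = n := by
  simp only [excNum, fixNum, deficiencyNum, card_filter, ← sum_add_distrib, Fin.ext_iff]
  calc _ = ∑ _ : Fin n, 1 := sum_congr rfl fun x _ ↦ by split_ifs <;> omega
    _ = n := by simp

end Displacement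

theorem gcd_excNum_eq_gcd_deficiencyNum {n d r : ℕ} (σ : Perm (Fin n)) (hd : d ∣ n)
    (hr : ∀ x, Function.minimalPeriod σ x = r) :
    Nat.gcd (excNum σ) d = Nat.gcd d (deficiencyNum σ) := by
  have hcount := excNum_add_fixNum_add_deficiencyNum σ
  by_cases hfix : fixNum σ = 0
  · obtain ⟨q, rfl⟩ := hd
    rw [show excNum σ = d * q - deficiencyNum σ by omega, Nat.gcd_mul_left_sub_left (by omega),
      Nat.gcd_comm]
  · obtain ⟨x, hx⟩ := card_ne_zero.1 hfix
    have hr1 : r = 1 :=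
      (hr x).symm.trans (Function.minimalPeriod_eq_one_iff_isFixedPt.2 (mem_filter.1 hx).2)
    have hid : ∀ y, σ y = y := fun y ↦
      Function.minimalPeriod_eq_one_iff_isFixedPt.1 ((hr y).trans hr1)
    simp [excNum, deficiencyNum, hid]

theorem natCast_val_inj {n : ℕ} {x y : Fin n} : ((x : ℕ) : ZMod n) = (y : ℕ) ↔ x = y := by
  rw [ZMod.natCast_eq_natCast_iff', Nat.mod_eq_of_lt x.2, Nat.mod_eq_of_lt y.2, Fin.val_inj]

def classRep (d : ℕ) [NeZero d] {k : ℕ} : Fin k → Fin (d * k) :=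
  Fin.castLE (Nat.le_mul_of_pos_left k (NeZero.pos d))

theorem modNat_classRep {d k : ℕ} [NeZero d] (j : Fin k) : (classRep d j).modNat = j :=
  Fin.ext (Nat.mod_eq_of_lt j.2)

section Centralizer

variable {d k : ℕ} {σ : Perm (Fin (d * k))}

theorem apply_finRotate_pow_mul_apply (hσ : Commute σ (finRotate (d * k) ^ k)) (t : ℕ)
    (x : Fin (d * k)) :
    σ ((finRotate (d * k) ^ (k * t)) x) = (finRotate (d * k) ^ (k * t)) (σ x) := by
  rw [pow_mul]
  exact DFunLike.congr_fun (hσ.pow_right t).eq x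

theorem displacement_finRotate_pow_mul_apply (hσ : Commute σ (finRotate (d * k) ^ k)) (t : ℕ)
    (x : Fin (d * k)) : displacement σ ((finRotate (d * k) ^ (k * t)) x) = displacement σ x := by
  rw [displacement, displacement, apply_finRotate_pow_mul_apply hσ, natCast_finRotate_pow_apply,
    natCast_finRotate_pow_apply]
  ring

theorem displacement_eq_of_modNat_eq (hσ : Commute σ (finRotate (d * k) ^ k))
    {x y : Fin (d * k)} (h : x.modNat = y.modNat) : displacement σ x = displacement σ y := by
  obtain ⟨t, rfl⟩ := exists_finRotate_pow_mul_apply_eq h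
  exact (displacement_finRotate_pow_mul_apply hσ t x).symm

variable [NeZero d]

theorem sum_val_displacement_eq_mul (hσ : Commute σ (finRotate (d * k) ^ k)) :
    ∑ x, (displacement σ x).val = d * ∑ j, (displacement σ (classRep d j)).val := by
  rw [← finProdFinEquiv.sum_comp, Fintype.sum_prod_type]
  have hclass :
      ∀ a b, displacement σ (finProdFinEquiv (a, b)) = displacement σ (classRep d b) :=
    fun a b ↦ displacement_eq_of_modNat_eq hσ <| Fin.ext <| by
      rw [modNat_classRep, Fin.coe_modNat, finProdFinEquiv_apply_val, Nat.add_mul_mod_self_left,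
        Nat.mod_eq_of_lt b.2]
  simp only [hclass, sum_const, card_univ, Fintype.card_fin, smul_eq_mul]

theorem sum_val_displacement_classRep (hσ : Commute σ (finRotate (d * k) ^ k)) :
    ∑ j, (displacement σ (classRep d j)).val = k * deficiencyNum σ :=
  Nat.eq_of_mul_eq_mul_left (NeZero.pos d) (by
    rw [← sum_val_displacement_eq_mul hσ, sum_val_displacement, mul_assoc])

variable [NeZero k]

theorem modNat_apply_eq_phiFun (hσ : Commute σ (finRotate (d * k) ^ k)) (x : Fin (d * k)) :
    (σ x).modNat = phiFun σ x.modNat := by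
  obtain ⟨t, ht⟩ := exists_finRotate_pow_mul_apply_eq (modNat_classRep (d := d) x.modNat)
  conv_lhs => rw [← ht, apply_finRotate_pow_mul_apply hσ, modNat_finRotate_pow_mul]
  rfl

theorem modNat_iterate_apply (hσ : Commute σ (finRotate (d * k) ^ k)) (m : ℕ)
    (x : Fin (d * k)) :
    (σ^[m] x).modNat = (phiFun σ)^[m] x.modNat :=
  Function.Semiconj.iterate_right (modNat_apply_eq_phiFun hσ) m x

theorem sum_displacement_iterate_range (hσ : Commute σ (finRotate (d * k) ^ k))
    (hΦ : ∀ x y : Fin k, ∃ m : ℕ, (phiFun σ)^[m] x = y) (y : Fin (d * k)) :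
    ∑ t ∈ range k, displacement σ (σ^[t] y) = ∑ j, displacement σ (classRep d j) := by
  rw [← Function.sum_iterate_range_card hΦ (fun j ↦ displacement σ (classRep d j)) y.modNat,
    Fintype.card_fin]
  refine sum_congr rfl fun t _ ↦ displacement_eq_of_modNat_eq hσ ?_
  rw [modNat_classRep, modNat_iterate_apply hσ]

theorem natCast_iterate_apply_eq_add (hσ : Commute σ (finRotate (d * k) ^ k))
    (hΦ : ∀ x y : Fin k, ∃ m : ℕ, (phiFun σ)^[m] x = y) (y : Fin (d * k)) :
    ((σ^[k] y : ℕ) : ZMod (d * k)) =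
      (y : ℕ) + ((k * deficiencyNum σ : ℕ) : ZMod (d * k)) := by
  rw [natCast_iterate_apply, sum_displacement_iterate_range hσ hΦ,
    ← sum_val_displacement_classRep hσ, Nat.cast_sum]
  simp only [ZMod.natCast_zmod_val]

theorem natCast_iterate_mul_apply (hσ : Commute σ (finRotate (d * k) ^ k))
    (hΦ : ∀ x y : Fin k, ∃ m : ℕ, (phiFun σ)^[m] x = y) (m : ℕ) (y : Fin (d * k)) :
    ((σ^[k * m] y : ℕ) : ZMod (d * k)) =
      (y : ℕ) + m • ((k * deficiencyNum σ : ℕ) : ZMod (d * k)) := by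
  induction m with
  | zero => simp
  | succ m ih =>
    rw [mul_add_one, add_comm, Function.iterate_add_apply, natCast_iterate_apply_eq_add hσ hΦ, ih,
      succ_nsmul, add_assoc]

theorem isPeriodicPt_mul_iff (hσ : Commute σ (finRotate (d * k) ^ k))
    (hΦ : ∀ x y : Fin k, ∃ m : ℕ, (phiFun σ)^[m] x = y) (m : ℕ) (y : Fin (d * k)) :
    Function.IsPeriodicPt σ (k * m) y ↔
      m • ((k * deficiencyNum σ : ℕ) : ZMod (d * k)) = 0 := by
  rw [Function.IsPeriodicPt, Function.IsFixedPt, ← natCast_val_inj,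
    natCast_iterate_mul_apply hσ hΦ, add_eq_left]

theorem minimalPeriod_eq_mul_div_gcd (hσ : Commute σ (finRotate (d * k) ^ k))
    (hΦ : ∀ x y : Fin k, ∃ m : ℕ, (phiFun σ)^[m] x = y) (y : Fin (d * k)) :
    Function.minimalPeriod σ y = k * (d / Nat.gcd d (deficiencyNum σ)) := by
  have horder : addOrderOf ((k * deficiencyNum σ : ℕ) : ZMod (d * k)) =
      d / Nat.gcd d (deficiencyNum σ) := by
    generalize deficiencyNum σ = T
    rw [ZMod.addOrderOf_coe _ (NeZero.ne _), mul_comm d k, Nat.gcd_mul_left,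
      Nat.mul_div_mul_left _ _ (NeZero.pos k)]
  have hk : k ∣ Function.minimalPeriod σ y := by
    have hΦper := (Function.isPeriodicPt_minimalPeriod σ y).map (modNat_apply_eq_phiFun hσ)
    simpa [Function.minimalPeriod_eq_card_of_forall_exists_iterate_eq hΦ] using
      hΦper.minimalPeriod_dvd
  obtain ⟨m, hm⟩ := hk
  rw [← horder]
  refine Nat.dvd_antisymm
    ((isPeriodicPt_mul_iff hσ hΦ _ y).2 (addOrderOf_nsmul_eq_zero _)).minimalPeriod_dvd ?_
  rw [hm]
  exact mul_dvd_mul_left k <| addOrderOf_dvd_of_nsmul_eq_zero <|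
    (isPeriodicPt_mul_iff hσ hΦ m y).1 (hm ▸ Function.isPeriodicPt_minimalPeriod σ y)

end Centralizer

/-- Let `n = d·k` and let `σ` be an element of the centralizer of `γ_n^k` in `S_n` whose
induced permutation `Φ(σ)` of the congruence classes mod `k` is a `k`-cycle, and suppose
all cycles of `σ` have length `r` (so `σ` has cycle type `r^{n/r}`).  Then
`gcd(exc(σ), d) = n/r`. -/
theorem gcd_exc_eq (d k r : ℕ) [NeZero d] [NeZero k]
    (σ : Equiv.Perm (Fin (d * k)))
    (hσ : σ ∈ Subgroup.centralizer {finRotate (d * k) ^ k})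
    (hΦ : ∀ x y : Fin k, ∃ m : ℕ, (phiFun σ)^[m] x = y)
    (hr : ∀ x : Fin (d * k), Function.minimalPeriod (⇑σ) x = r) :
    Nat.gcd (excNum σ) d = d * k / r := by
  have hcomm : Commute σ (finRotate (d * k) ^ k) := Subgroup.mem_centralizer_singleton_iff.1 hσ
  have hr' : r = k * (d / Nat.gcd d (deficiencyNum σ)) :=
    (hr 0).symm.trans (minimalPeriod_eq_mul_div_gcd hcomm hΦ 0)
  rw [gcd_excNum_eq_gcd_deficiencyNum σ (dvd_mul_right d k) hr, hr']
  generalize deficiencyNum σ = T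
  rw [mul_comm d k, Nat.mul_div_mul_left _ _ (NeZero.pos k),
    Nat.div_div_self (Nat.gcd_dvd_left _ _) (NeZero.ne d)]
end

section
/- Let k, b, c be positive integers with c | b. Then (t A_{k−1}(t) [b]_t^k)_{b,c} = c^{k−1} (t^c A_{k−1}(t^c) [b/c]_{t^c}^k)_{b,c}, where for a power series f(t) = Σ_j a_j t^j, f(t)_{b,c} denotes Σ_{j : gcd(j,b)=c} a_j t^j. -/
open Finset Equiv

/-- The operation `f(t) ↦ f(t)_{b,c}` erasing all terms `a_j t^j` with `gcd(j, b) ≠ c`. -/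
noncomputable def restrictGcd (b c : ℕ) (f : Polynomial ℚ) : Polynomial ℚ :=
  ∑ j ∈ f.support.filter (fun j => Nat.gcd j b = c), Polynomial.monomial j (f.coeff j)

/-!
With `G_K(t) = ∑_{m ≥ 1} m^K t^m`, Carlitz's identity `t A_K(t) = (1 - t)^(K+1) G_K(t)` follows by
induction on `K`: apply `θ = t d/dt`, which maps `G_K` to `G_(K+1)`, and use the excedance
recursion `A_(K+1) = (1 + K t) A_K + (1 - t) θ A_K` obtained by inserting a new first letter.
Hence `t A_K(t) [n]_t^(K+1) = (1 - t^n)^(K+1) G_K(t)`. For `n = b = c d` the factor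
`(1 - t^(c d))^(K+1)` is a series in `t^c`, and `[t^(c m)] G_K = c^K [t^m] G_K`, so the coefficient
of `t^(c m)` on the left is `c^K` times that of `t^m` in `t A_K(t) [d]_t^(K+1)`, i.e. of `t^(c m)`
in the right-hand polynomial. Every `j` with `gcd(j, b) = c` is such a multiple `c m`.
-/
theorem excNum_le {n : ℕ} (σ : Perm (Fin n)) : excNum σ ≤ n :=
  (card_filter_le _ _).trans_eq (card_fin n)

theorem excNum_decomposeFin_symm_zero {n : ℕ} (e : Perm (Fin n)) :
    excNum (Perm.decomposeFin.symm (0, e)) = excNum e := by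
  simp [excNum, Fin.card_filter_univ_succ', Perm.decomposeFin_symm_apply_zero,
    Perm.decomposeFin_symm_apply_succ]

/-- `decomposeFin.symm (q + 1, e)` maps `0 ↦ q + 1`, `e⁻¹ q + 1 ↦ 0` and `i + 1 ↦ e i + 1`
otherwise: it gains the excedance at `0` and loses the one at `e⁻¹ q` if there was one. -/
theorem excNum_decomposeFin_symm_succ {n : ℕ} (e : Perm (Fin n)) (q : Fin n) :
    excNum (Perm.decomposeFin.symm (q.succ, e)) =
      if (e.symm q : ℕ) < q then excNum e else excNum e + 1 := by
  have hsucc : univ.filter (fun i : Fin n =>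
      ((i.succ : Fin (n + 1)) : ℕ) < Perm.decomposeFin.symm (q.succ, e) i.succ) =
      (univ.filter fun i : Fin n => (i : ℕ) < e i).erase (e.symm q) := by
    ext i
    rcases eq_or_ne (e i) q with h | h
    · simp [Perm.decomposeFin_symm_apply_succ, h, Equiv.eq_symm_apply]
    · have : i ≠ e.symm q := fun hi => h (by simp [hi])
      simp [Perm.decomposeFin_symm_apply_succ, Equiv.swap_apply_of_ne_of_ne, h, this]
  have hmem : e.symm q ∈ univ.filter (fun i : Fin n => (i : ℕ) < e i) ↔ (e.symm q : ℕ) < q := by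
    simp
  rw [excNum, Fin.card_filter_univ_succ', hsucc, Finset.card_erase_eq_ite, ← excNum]
  have hzero : ((0 : Fin (n + 1)) : ℕ) < Perm.decomposeFin.symm (q.succ, e) 0 := by
    simp [Perm.decomposeFin_symm_apply_zero]
  rw [if_pos hzero]
  simp only [hmem]
  split_ifs with hq
  · have : 0 < excNum e := Finset.card_pos.mpr ⟨_, hmem.mpr hq⟩
    omega
  · exact add_comm _ _

theorem card_filter_not_lt_apply {n : ℕ} (e : Perm (Fin n)) :
    #(univ.filter fun i : Fin n => ¬ (i : ℕ) < e i) = n - excNum e := by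
  rw [Finset.filter_not, Finset.card_sdiff_of_subset (filter_subset _ _), card_univ,
    Fintype.card_fin, excNum]

theorem sum_perm_succ_excNum {M : Type*} [AddCommMonoid M] (n : ℕ) (F : ℕ → M) :
    ∑ τ : Perm (Fin (n + 1)), F (excNum τ) =
      ∑ e : Perm (Fin n), ((excNum e + 1) • F (excNum e) + (n - excNum e) • F (excNum e + 1)) := by
  rw [← Perm.decomposeFin.symm.sum_comp, Fintype.sum_prod_type, Finset.sum_comm]
  refine Finset.sum_congr rfl fun e _ => ?_
  simp only [Fin.sum_univ_succ, excNum_decomposeFin_symm_zero, excNum_decomposeFin_symm_succ,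
    apply_ite F]
  rw [← Equiv.sum_comp e, Finset.sum_ite]
  simp only [Equiv.symm_apply_apply, sum_const, card_filter_not_lt_apply]
  rw [← excNum, succ_nsmul', add_assoc]

open PowerSeries

noncomputable def theta (R : Type*) [CommSemiring R] : Derivation R R⟦X⟧ R⟦X⟧ :=
  (X : R⟦X⟧) • derivative R

theorem coeff_theta {R : Type*} [CommSemiring R] (f : R⟦X⟧) (n : ℕ) :
    coeff n (theta R f) = n * coeff n f := by
  rcases n with _ | n
  · simp [theta]
  · simp [theta, coeff_derivative, mul_comm]

theorem theta_X_pow {R : Type*} [CommSemiring R] (n : ℕ) :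
    theta R (X ^ n) = (n : R⟦X⟧) * X ^ n := by
  ext m
  rw [coeff_theta, ← map_natCast (C (R := R)), coeff_C_mul, coeff_X_pow]
  split_ifs with h <;> simp [h]

theorem theta_X {R : Type*} [CommSemiring R] : theta R X = X := by
  simpa using theta_X_pow (R := R) 1

theorem coe_eulerianExc (n : ℕ) :
    ((eulerianExc n : Polynomial ℚ) : ℚ⟦X⟧) = ∑ σ : Perm (Fin n), X ^ excNum σ := by
  simp only [eulerianExc, ← Polynomial.coeToPowerSeries.ringHom_apply, map_sum, map_pow]
  simp [Polynomial.coeToPowerSeries.ringHom_apply]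

theorem coe_eulerianExc_succ (n : ℕ) :
    ((eulerianExc (n + 1) : Polynomial ℚ) : ℚ⟦X⟧) =
      (1 + (n : ℚ⟦X⟧) * X) * (eulerianExc n : ℚ⟦X⟧) + (1 - X) * theta ℚ (eulerianExc n) := by
  simp only [coe_eulerianExc, sum_perm_succ_excNum n (X ^ ·), map_sum, theta_X_pow, mul_sum,
    ← sum_add_distrib]
  refine sum_congr rfl fun e _ => ?_
  rw [nsmul_eq_mul, nsmul_eq_mul, Nat.cast_sub (excNum_le e)]
  push_cast
  ring

/-- `Li_{-K}(t) = ∑_{m ≥ 1} m^K t^m`; the term `m = 0` is excluded by hand since `0 ^ 0 = 1`. -/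
noncomputable def negPolylog (K : ℕ) : ℚ⟦X⟧ :=
  mk fun m => if m = 0 then 0 else (m : ℚ) ^ K

theorem theta_negPolylog (K : ℕ) : theta ℚ (negPolylog K) = negPolylog (K + 1) := by
  ext m
  rw [coeff_theta]
  rcases eq_or_ne m 0 with rfl | hm
  · simp [negPolylog]
  · simp [negPolylog, hm, pow_succ, mul_comm]

theorem coeff_mul_negPolylog {c : ℕ} (hc : c ≠ 0) (K m : ℕ) :
    coeff (c * m) (negPolylog K) = (c : ℚ) ^ K * coeff m (negPolylog K) := by
  rcases eq_or_ne m 0 with rfl | hm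
  · simp [negPolylog]
  · simp [negPolylog, hc, hm, mul_pow]

theorem one_sub_X_mul_negPolylog_zero : (1 - X) * negPolylog 0 = X := by
  ext m
  rw [sub_mul, one_mul, map_sub]
  rcases m with _ | _ | m <;> simp [negPolylog, coeff_succ_X_mul, coeff_X]

theorem one_sub_X_pow_mul_negPolylog (K : ℕ) :
    (1 - X) ^ (K + 1) * negPolylog K = X * (eulerianExc K : ℚ⟦X⟧) := by
  induction K with
  | zero =>
    have : ((eulerianExc 0 : Polynomial ℚ) : ℚ⟦X⟧) = 1 := by simp [coe_eulerianExc, excNum]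
    rw [this, mul_one, pow_one, one_sub_X_mul_negPolylog_zero]
  | succ K ih =>
    have h := congrArg (theta ℚ) ih
    simp only [Derivation.leibniz, Derivation.leibniz_pow, map_sub, Derivation.map_one_eq_zero,
      theta_X, theta_negPolylog, smul_eq_mul, nsmul_eq_mul, Nat.add_sub_cancel] at h
    rw [coe_eulerianExc_succ]
    push_cast at h
    linear_combination (1 - X) * h + ((K : ℚ⟦X⟧) + 1) * X * ih

theorem coeff_mul_expand_mul {R : Type*} [CommSemiring R] {c : ℕ} (hc : 0 < c) {F : R⟦X⟧}
    {a : R} (hF : ∀ n, coeff (c * n) F = a * coeff n F) (P : Polynomial R) (m : ℕ) :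
    coeff (c * m) ((Polynomial.expand R c P : R⟦X⟧) * F) = a * coeff m ((P : R⟦X⟧) * F) := by
  induction P using Polynomial.induction_on' with
  | add p q hp hq => simp only [map_add, Polynomial.coe_add, add_mul, hp, hq, mul_add]
  | monomial i r =>
    simp only [← Polynomial.C_mul_X_pow_eq_monomial, map_mul, map_pow, Polynomial.expand_C,
      Polynomial.expand_X, Polynomial.coe_mul, Polynomial.coe_C, Polynomial.coe_pow,
      Polynomial.coe_X, mul_assoc, coeff_C_mul, coeff_X_pow_mul', ← pow_mul]
    rw [← Nat.mul_sub, hF]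
    by_cases hi : i ≤ m
    · rw [if_pos (Nat.mul_le_mul_left c hi), if_pos hi, mul_left_comm]
    · rw [if_neg (fun h => hi (Nat.le_of_mul_le_mul_left h hc)), if_neg hi, mul_zero, mul_zero]

theorem coe_X_mul_eulerianExc_mul_geom_sum_pow (K n : ℕ) :
    ((Polynomial.X * eulerianExc K * (∑ i ∈ range n, Polynomial.X ^ i) ^ (K + 1) :
        Polynomial ℚ) : ℚ⟦X⟧) =
      (((1 - Polynomial.X ^ n) ^ (K + 1) : Polynomial ℚ) : ℚ⟦X⟧) * negPolylog K := by
  set S : Polynomial ℚ := ∑ i ∈ range n, Polynomial.X ^ i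
  calc _ = X * (eulerianExc K : ℚ⟦X⟧) * (S : ℚ⟦X⟧) ^ (K + 1) := by
          push_cast; rfl
    _ = ((1 - X) * (S : ℚ⟦X⟧)) ^ (K + 1) * negPolylog K := by
          rw [← one_sub_X_pow_mul_negPolylog, mul_pow]; ring
    _ = _ := by
          rw [← mul_neg_geom_sum]
          push_cast
          rfl

theorem coeff_X_mul_eulerianExc_mul_geom_sum_pow_dilate (K : ℕ) {c : ℕ} (hc : 0 < c) (n m : ℕ) :
    (Polynomial.X * eulerianExc K * (∑ i ∈ range (c * n), Polynomial.X ^ i) ^ (K + 1)).coeff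
        (c * m) =
      (c : ℚ) ^ K *
        (Polynomial.X * eulerianExc K * (∑ i ∈ range n, Polynomial.X ^ i) ^ (K + 1)).coeff m := by
  have hexpand : ((1 - Polynomial.X ^ (c * n)) ^ (K + 1) : Polynomial ℚ) =
      Polynomial.expand ℚ c ((1 - Polynomial.X ^ n) ^ (K + 1)) := by
    simp [← pow_mul]
  rw [← Polynomial.coeff_coe, ← Polynomial.coeff_coe, coe_X_mul_eulerianExc_mul_geom_sum_pow,
    coe_X_mul_eulerianExc_mul_geom_sum_pow, hexpand,
    coeff_mul_expand_mul hc (coeff_mul_negPolylog hc.ne' K)]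

theorem coeff_restrictGcd (b c : ℕ) (f : Polynomial ℚ) (j : ℕ) :
    (restrictGcd b c f).coeff j = if Nat.gcd j b = c then f.coeff j else 0 := by
  simp only [restrictGcd, Polynomial.finsetSum_coeff, Polynomial.coeff_monomial, sum_ite_eq',
    mem_filter, Polynomial.mem_support_iff]
  by_cases hj : f.coeff j = 0 <;> simp [hj]

theorem restrictGcd_eulerian_general (k b c : ℕ) (hk : 0 < k) (hc : 0 < c)
    (hcb : c ∣ b) :
    restrictGcd b c
        (Polynomial.X * eulerianExc (k - 1) * (∑ i ∈ Finset.range b, Polynomial.X ^ i) ^ k) =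
      Polynomial.C ((c : ℚ) ^ (k - 1)) *
        restrictGcd b c
          (Polynomial.X ^ c * (eulerianExc (k - 1)).comp (Polynomial.X ^ c) *
            (∑ i ∈ Finset.range (b / c), (Polynomial.X ^ c) ^ i) ^ k) := by
  obtain ⟨K, rfl⟩ : ∃ K, k = K + 1 := ⟨k - 1, by omega⟩
  obtain ⟨d, rfl⟩ := hcb
  rw [Nat.add_sub_cancel, Nat.mul_div_cancel_left d hc]
  have hexpand : Polynomial.X ^ c * (eulerianExc K).comp (Polynomial.X ^ c) *
      (∑ i ∈ range d, (Polynomial.X ^ c) ^ i) ^ (K + 1) =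
      Polynomial.expand ℚ c
        (Polynomial.X * eulerianExc K * (∑ i ∈ range d, Polynomial.X ^ i) ^ (K + 1)) := by
    simp [Polynomial.expand_eq_comp_X_pow, Polynomial.sum_comp]
  rw [hexpand]
  ext j
  rw [Polynomial.coeff_C_mul, coeff_restrictGcd, coeff_restrictGcd]
  split_ifs with hg
  · obtain ⟨m, rfl⟩ : c ∣ j := hg ▸ Nat.gcd_dvd_left j (c * d)
    rw [Polynomial.coeff_expand_mul' hc, coeff_X_mul_eulerianExc_mul_geom_sum_pow_dilate K hc]
  · rw [mul_zero]

/-- For positive integers `k, b, c` with `c ∣ b`: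
`(t A_{k−1}(t) [b]_t^k)_{b,c} = c^{k−1} (t^c A_{k−1}(t^c) [b/c]_{t^c}^k)_{b,c}`. -/
theorem restrictGcd_eulerian (k b c : ℕ) (hk : 0 < k) (hb : 0 < b) (hc : 0 < c)
    (hcb : c ∣ b) :
    restrictGcd b c
        (Polynomial.X * eulerianExc (k - 1) * (∑ i ∈ Finset.range b, Polynomial.X ^ i) ^ k) =
      Polynomial.C ((c : ℚ) ^ (k - 1)) *
        restrictGcd b c
          (Polynomial.X ^ c * (eulerianExc (k - 1)).comp (Polynomial.X ^ c) *
            (∑ i ∈ Finset.range (b / c), (Polynomial.X ^ c) ^ i) ^ k) :=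
  restrictGcd_eulerian_general k b c hk hc hcb
end
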